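/- arXiv:1406.1708 — 5 statements merged into one kernel-verified Lean document; each statement's English description precedes it below -/
import Mathlib

section
/- With the data below, the projected cone K satisfies K = cl(cone(𝒫 × {1})), i.e., the cone in ℝ^{q+1} defined by K = {y ∈ ℝ^{q+1} : ∃x ∈ ℝ^n, Gx + Hy ≥ 0} equals the closed conical hull of the upper image 𝒫 of (VLP) embedded at height 1. -/
open Matrix Set Pointwise

noncomputable section

/-- `cone B = {l • x : l ≥ 0, x ∈ conv B}` -/
def coneOf {E : Type*} [AddCommGroup E] [Module ℝ E] (B : Set E) : Set E :=
  {y | ∃ l : ℝ, 0 ≤ l ∧ ∃ x ∈ convexHull ℝ B, y = l • x}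

/-- `F` is a face of the convex set `B`. -/
def IsFaceOf {E : Type*} [AddCommGroup E] [Module ℝ E] (F B : Set E) : Prop :=
  Convex ℝ F ∧ F ⊆ B ∧
    ∀ y ∈ B, ∀ z ∈ B, ∀ l : ℝ, 0 < l → l < 1 → l • y + (1 - l) • z ∈ F → y ∈ F ∧ z ∈ F

/-- recession cone `0⁺B` of a convex set. -/
def recCone {E : Type*} [AddCommGroup E] [Module ℝ E] (B : Set E) : Set E :=
  {d | ∀ x ∈ B, ∀ t : ℝ, 0 ≤ t → x + t • d ∈ B}

/-- lineality space `L(B) = 0⁺B ∩ (−0⁺B)`. -/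
def linealOf {E : Type*} [AddCommGroup E] [Module ℝ E] (B : Set E) : Set E :=
  recCone B ∩ -recCone B

/-- dimension of (the affine hull of) a set. -/
def sdim {E : Type*} [AddCommGroup E] [Module ℝ E] (B : Set E) : ℕ :=
  Module.finrank ℝ (vectorSpan ℝ B)

def IsPolyhedron {d : ℕ} (B : Set (Fin d → ℝ)) : Prop :=
  ∃ (k : ℕ) (W : Matrix (Fin k) (Fin d) ℝ) (v : Fin k → ℝ), B = {x | v ≤ W.mulVec x}

/-- orthogonal complement (as a set) of a set of vectors. -/
def orthSet {d : ℕ} (L : Set (Fin d → ℝ)) : Set (Fin d → ℝ) :=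
  {y | ∀ z ∈ L, y ⬝ᵥ z = 0}

/-- polar cone `K° = {w : ∀ y ∈ K, wᵀy ≤ 0}`. -/
def polarCone {d : ℕ} (K : Set (Fin d → ℝ)) : Set (Fin d → ℝ) :=
  {w | ∀ y ∈ K, w ⬝ᵥ y ≤ 0}

/-- the last index of `Fin q` (1-based index `q`). -/
def lastIdx (q : ℕ) (hq : 0 < q) : Fin q := ⟨q - 1, by omega⟩

/-- `y ↦ (y,1)`. -/
def lift1 {q : ℕ} (y : Fin q → ℝ) : Fin (q + 1) → ℝ := Fin.snoc y 1

/-- `y ↦ (y,0)`. -/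
def lift0 {q : ℕ} (y : Fin q → ℝ) : Fin (q + 1) → ℝ := Fin.snoc y 0

/-- `p(y) = (y₁,…,y_q)`. -/
def projq {q : ℕ} (y : Fin (q + 1) → ℝ) : Fin q → ℝ := fun i => y i.castSucc

/-- `Φ(B) = cl cone (B × {1})`. -/
def PhiMap {q : ℕ} (B : Set (Fin q → ℝ)) : Set (Fin (q + 1) → ℝ) :=
  closure (coneOf (lift1 '' B))

/-- the block matrix `G = (A; −ZᵀP; 0)`. -/
def Gmat {m n q r : ℕ} (A : Matrix (Fin m) (Fin n) ℝ) (P : Matrix (Fin q) (Fin n) ℝ)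
    (Z : Matrix (Fin q) (Fin r) ℝ) : Matrix (Fin (m + r + 1)) (Fin n) ℝ :=
  fun i j =>
    if h : (i : ℕ) < m then A ⟨i, h⟩ j
    else if h2 : (i : ℕ) < m + r then -(∑ l : Fin q, Z l ⟨(i : ℕ) - m, by omega⟩ * P l j)
    else 0

/-- the block matrix `H` with rows `(0, −b)`, `(Zᵀ, 0)` and `(0,…,0,1)`. -/
def Hmat {m q r : ℕ} (b : Fin m → ℝ) (Z : Matrix (Fin q) (Fin r) ℝ) :
    Matrix (Fin (m + r + 1)) (Fin (q + 1)) ℝ :=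
  fun i j =>
    if h : (i : ℕ) < m then (if (j : ℕ) = q then -b ⟨i, h⟩ else 0)
    else if h2 : (i : ℕ) < m + r then
      (if hj : (j : ℕ) < q then Z ⟨j, hj⟩ ⟨(i : ℕ) - m, by omega⟩ else 0)
    else (if (j : ℕ) = q then 1 else 0)

/-- dual objective `D(u,w) = (w₁,…,w_{q−1}, bᵀu)`. -/
def Dmap {m q : ℕ} (b : Fin m → ℝ) (uw : (Fin m → ℝ) × (Fin q → ℝ)) : Fin q → ℝ :=
  fun i => if (i : ℕ) < q - 1 then uw.2 i else b ⬝ᵥ uw.1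

/-- `R* = {v : v₁ = ⋯ = v_{q−1} = 0, v_q ≥ 0}`. -/
def RstarSet (q : ℕ) (hq : 0 < q) : Set (Fin q → ℝ) :=
  {v | (∀ i : Fin q, (i : ℕ) < q - 1 → v i = 0) ∧ 0 ≤ v (lastIdx q hq)}

/-- dual feasible set `T`. -/
def Tset {m n q r : ℕ} (A : Matrix (Fin m) (Fin n) ℝ) (P : Matrix (Fin q) (Fin n) ℝ)
    (Z : Matrix (Fin q) (Fin r) ℝ) (cbar : Fin q → ℝ) :
    Set ((Fin m → ℝ) × (Fin q → ℝ)) :=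
  {uw | ∃ v : Fin r → ℝ, 0 ≤ v ∧ uw.2 = Z.mulVec v ∧
    Aᵀ.mulVec uw.1 = Pᵀ.mulVec uw.2 ∧ cbar ⬝ᵥ uw.2 = 1 ∧ 0 ≤ uw.1}

/-- `φ(y,w) = Σ_{i<q} y_i w_i + y_q (1 − Σ_{i<q} c̄_i w_i) − w_q`. -/
def phiFn {q : ℕ} (hq : 0 < q) (cbar : Fin q → ℝ) (y w : Fin q → ℝ) : ℝ :=
  (∑ i : Fin q, if (i : ℕ) < q - 1 then y i * w i else 0)
    + y (lastIdx q hq) * (1 - ∑ i : Fin q, if (i : ℕ) < q - 1 then cbar i * w i else 0)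
    - w (lastIdx q hq)

/-- duality map `Ψ(F*) = ⋂_{w ∈ F*} {y ∈ Pset : φ(y,w) = 0}`. -/
def PsiMap {q : ℕ} (hq : 0 < q) (cbar : Fin q → ℝ) (Pset : Set (Fin q → ℝ))
    (Fstar : Set (Fin q → ℝ)) : Set (Fin q → ℝ) :=
  ⋂ w ∈ Fstar, {y ∈ Pset | phiFn hq cbar y w = 0}

/-- `My = (−y₁,…,−y_{q−1}, c̄₁y₁+⋯+c̄_{q−1}y_{q−1} − y_{q+1}, y_q)`. -/
def Mmap {q : ℕ} (hq : 0 < q) (cbar : Fin q → ℝ) (y : Fin (q + 1) → ℝ) : Fin (q + 1) → ℝ :=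
  fun i =>
    if (i : ℕ) < q - 1 then -y i
    else if (i : ℕ) = q - 1 then
      (∑ j : Fin q, if (j : ℕ) < q - 1 then cbar j * y j.castSucc else 0) - y (Fin.last q)
    else y ((lastIdx q hq).castSucc)

/-- `M⁻¹w = (−w₁,…,−w_{q−1}, w_{q+1}, −cᵀw)` where `c = (c̄,0)`. -/
def MinvMap {q : ℕ} (cbar : Fin q → ℝ) (w : Fin (q + 1) → ℝ) : Fin (q + 1) → ℝ :=
  fun i =>
    if (i : ℕ) < q - 1 then -w i
    else if (i : ℕ) = q - 1 then w (Fin.last q)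
    else -((Fin.snoc cbar 0 : Fin (q + 1) → ℝ) ⬝ᵥ w)

/-- `p*(w) = (w₁,…,w_{q−1},w_{q+1})`. -/
def pstarMap {q : ℕ} (w : Fin (q + 1) → ℝ) : Fin q → ℝ :=
  fun i => if (i : ℕ) < q - 1 then w i.castSucc else w (Fin.last q)

/-- `y` generates an extreme ray of the pointed convex cone `Q`. -/
def IsExtremeDir {E : Type*} [AddCommGroup E] [Module ℝ E] (Q : Set E) (y : E) : Prop :=
  y ∈ Q ∧ y ≠ 0 ∧ IsFaceOf (coneOf {y}) Q

/-- `σ(u,w) = (u¹, −p(w))` where `u = (u¹,u²,u³) ∈ ℝ^m×ℝ^r×ℝ`. -/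
def sigmaMap {m q r : ℕ} (uw : (Fin (m + r + 1) → ℝ) × (Fin (q + 1) → ℝ)) :
    (Fin m → ℝ) × (Fin q → ℝ) :=
  (fun i => uw.1 (Fin.castLE (by omega) i), -projq uw.2)


section FM

open Finset

lemma fm_one {ι : Type*} [Fintype ι] (c d : ι → ℝ) :
    (∃ t : ℝ, ∀ i, 0 ≤ c i * t + d i) ↔
      (∀ i, c i = 0 → 0 ≤ d i) ∧
        (∀ i j, 0 < c i → c j < 0 → 0 ≤ c i * d j - c j * d i) := by
  classical
  constructor
  · rintro ⟨t, ht⟩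
    refine ⟨fun i hi => by have := ht i; rw [hi] at this; linarith, fun i j hi hj => ?_⟩
    have h1 := ht i
    have h2 := ht j
    nlinarith
  · rintro ⟨h0, hpn⟩
    by_cases hP : (univ.filter (fun i => 0 < c i)).Nonempty
    · set t := (univ.filter (fun i => 0 < c i)).sup' hP (fun i => -d i / c i) with htdef
      obtain ⟨i0, hi0mem, hi0⟩ := Finset.exists_mem_eq_sup' hP (fun i => -d i / c i)
      have hi0pos : 0 < c i0 := (Finset.mem_filter.1 hi0mem).2
      refine ⟨t, fun i => ?_⟩
      rcases lt_trichotomy (c i) 0 with hneg | hz | hpos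
      · have hpair := hpn i0 i hi0pos hneg
        have ht_le : t ≤ d i / (-c i) := by
          rw [htdef, hi0, div_le_div_iff₀ hi0pos (by linarith : (0:ℝ) < -c i)]
          nlinarith
        rw [le_div_iff₀ (by linarith : (0:ℝ) < -c i)] at ht_le
        nlinarith
      · rw [hz]; simpa using h0 i hz
      · have : -d i / c i ≤ t :=
          Finset.le_sup' (fun i => -d i / c i) (Finset.mem_filter.2 ⟨Finset.mem_univ i, hpos⟩)
        rw [div_le_iff₀ hpos] at this
        nlinarith
    · by_cases hN : (univ.filter (fun i => c i < 0)).Nonempty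
      · set t := (univ.filter (fun i => c i < 0)).inf' hN (fun i => d i / (-c i)) with htdef
        refine ⟨t, fun i => ?_⟩
        rcases lt_trichotomy (c i) 0 with hneg | hz | hpos
        · have : t ≤ d i / (-c i) :=
            Finset.inf'_le (fun i => d i / (-c i)) (Finset.mem_filter.2 ⟨Finset.mem_univ i, hneg⟩)
          rw [le_div_iff₀ (by linarith : (0:ℝ) < -c i)] at this
          nlinarith
        · rw [hz]; simpa using h0 i hz
        · exact absurd (Finset.mem_filter.2 ⟨Finset.mem_univ i, hpos⟩) (fun h => hP ⟨i, h⟩)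
      · refine ⟨0, fun i => ?_⟩
        have hz : c i = 0 := by
          rcases lt_trichotomy (c i) 0 with h | h | h
          · exact absurd (Finset.mem_filter.2 ⟨Finset.mem_univ i, h⟩) (fun hh => hN ⟨i, hh⟩)
          · exact h
          · exact absurd (Finset.mem_filter.2 ⟨Finset.mem_univ i, h⟩) (fun hh => hP ⟨i, hh⟩)
        rw [hz]; simpa using h0 i hz

def extL (n : ℕ) : (Fin n → ℝ) →ₗ[ℝ] (Fin (n + 1) → ℝ) where
  toFun x := Fin.snoc x 0
  map_add' a b := funext fun i => by
    cases i using Fin.lastCases <;> simp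
  map_smul' c a := funext fun i => by
    cases i using Fin.lastCases <;> simp

lemma fm_main {E : Type*} [AddCommGroup E] [Module ℝ E] :
    ∀ (n : ℕ) (ι : Type) (_ : Fintype ι) (f : ι → ((Fin n → ℝ) × E) →ₗ[ℝ] ℝ),
      ∃ (κ : Type) (_ : Fintype κ) (h : κ → E →ₗ[ℝ] ℝ),
        {y : E | ∃ x, ∀ i, 0 ≤ f i (x, y)} = {y | ∀ k, 0 ≤ h k y} := by
  intro n
  induction n with
  | zero =>
    intro ι _ f
    refine ⟨ι, inferInstance, fun i => (f i).comp (LinearMap.inr ℝ (Fin 0 → ℝ) E), ?_⟩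
    ext y
    simp only [Set.mem_setOf_eq, LinearMap.comp_apply, LinearMap.inr_apply]
    constructor
    · rintro ⟨x, hx⟩ i
      have : x = 0 := Subsingleton.elim _ _
      rw [← this]; exact hx i
    · intro h; exact ⟨0, h⟩
  | succ n IH =>
    intro ι _ f
    classical
    set c : ι → ℝ := fun i => f i (Fin.snoc 0 1, 0) with hc
    set F : ι → ((Fin n → ℝ) × E) →ₗ[ℝ] ℝ :=
      fun i => (f i).comp ((extL n).prodMap LinearMap.id) with hF
    have key : ∀ (x' : Fin n → ℝ) (t : ℝ) (y : E) (i : ι),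
        f i (Fin.snoc x' t, y) = c i * t + F i (x', y) := by
      intro x' t y i
      have hsplit : ((Fin.snoc x' t : Fin (n+1) → ℝ), y)
          = t • ((Fin.snoc 0 1 : Fin (n+1) → ℝ), (0:E))
            + ((Fin.snoc x' 0 : Fin (n+1) → ℝ), y) := by
        refine Prod.ext ?_ ?_
        · funext j
          cases j using Fin.lastCases with
          | last => simp
          | cast j => simp
        · simp
      rw [hsplit, map_add, LinearMap.map_smul]
      simp only [hc, hF, LinearMap.comp_apply, LinearMap.prodMap_apply, LinearMap.id_apply,
        smul_eq_mul, extL, LinearMap.coe_mk, AddHom.coe_mk]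
      ring
    set κ₀ : Type := {i : ι // c i = 0} ⊕ ({i : ι // 0 < c i} × {j : ι // c j < 0}) with hκ₀
    set g : κ₀ → ((Fin n → ℝ) × E) →ₗ[ℝ] ℝ :=
      Sum.elim (fun i => F i.1) (fun p => c p.1.1 • F p.2.1 - c p.2.1 • F p.1.1) with hg
    have equiv1 : {y : E | ∃ x, ∀ i, 0 ≤ f i (x, y)}
        = {y : E | ∃ x', ∀ k : κ₀, 0 ≤ g k (x', y)} := by
      ext y
      simp only [Set.mem_setOf_eq]
      constructor
      · rintro ⟨x, hx⟩
        refine ⟨Fin.init x, ?_⟩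
        have hx2 : ∃ t : ℝ, ∀ i, 0 ≤ c i * t + F i (Fin.init x, y) := by
          refine ⟨x (Fin.last n), fun i => ?_⟩
          rw [← key, Fin.snoc_init_self]
          exact hx i
        obtain ⟨h0, hpn⟩ := (fm_one c (fun i => F i (Fin.init x, y))).mp hx2
        rintro (⟨i, hi⟩ | ⟨⟨i, hi⟩, ⟨j, hj⟩⟩)
        · simpa [hg] using h0 i hi
        · have := hpn i j hi hj
          simpa [hg, sub_eq_add_neg] using this
      · rintro ⟨x', hk⟩
        have hex : ∃ t : ℝ, ∀ i, 0 ≤ c i * t + F i (x', y) := by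
          rw [fm_one]
          constructor
          · intro i hi
            simpa [hg] using hk (Sum.inl ⟨i, hi⟩)
          · intro i j hi hj
            have := hk (Sum.inr ⟨⟨i, hi⟩, ⟨j, hj⟩⟩)
            simpa [hg, sub_eq_add_neg] using this
        obtain ⟨t, ht⟩ := hex
        refine ⟨Fin.snoc x' t, fun i => ?_⟩
        rw [key]
        exact ht i
    obtain ⟨κ, hκ, h, hh⟩ := IH κ₀ inferInstance g
    exact ⟨κ, hκ, h, by rw [equiv1, hh]⟩

lemma fm_closed {n d k : ℕ} (f : Fin k → ((Fin n → ℝ) × (Fin d → ℝ)) →ₗ[ℝ] ℝ) :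
    IsClosed {y : Fin d → ℝ | ∃ x, ∀ i, 0 ≤ f i (x, y)} := by
  obtain ⟨κ, _, h, hh⟩ := fm_main n (Fin k) inferInstance f
  rw [hh]
  have : {y : Fin d → ℝ | ∀ kk, 0 ≤ h kk y} = ⋂ kk, {y | 0 ≤ h kk y} := by
    ext y; simp
  rw [this]
  exact isClosed_iInter fun kk =>
    isClosed_le continuous_const (h kk).continuous_of_finiteDimensional

end FM

section Rows

variable {m n q r : ℕ} (A : Matrix (Fin m) (Fin n) ℝ) (P : Matrix (Fin q) (Fin n) ℝ)
  (Z : Matrix (Fin q) (Fin r) ℝ) (b : Fin m → ℝ)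

lemma G_row1 (k : Fin (m + r + 1)) (hk : (k : ℕ) < m) (x : Fin n → ℝ) :
    (Gmat A P Z).mulVec x k = A.mulVec x ⟨(k : ℕ), hk⟩ := by
  unfold Matrix.mulVec dotProduct Gmat
  exact Finset.sum_congr rfl fun j _ => by simp only [dif_pos hk]

lemma H_row1 (k : Fin (m + r + 1)) (hk : (k : ℕ) < m) (y : Fin (q + 1) → ℝ) :
    (Hmat b Z).mulVec y k = -b ⟨(k : ℕ), hk⟩ * y (Fin.last q) := by
  unfold Matrix.mulVec dotProduct Hmat
  rw [Fin.sum_univ_castSucc]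
  have h1 : ∀ j : Fin q, ¬ ((j.castSucc : ℕ) = q) := fun j => by
    have := j.isLt; simp only [Fin.coe_castSucc]; omega
  rw [Finset.sum_eq_zero fun j _ => by simp only [dif_pos hk, if_neg (h1 j), zero_mul]]
  simp only [dif_pos hk, if_pos (show ((Fin.last q : Fin (q+1)) : ℕ) = q by simp)]
  ring

lemma G_row2 (k : Fin (m + r + 1)) (hk1 : ¬ (k : ℕ) < m) (hk2 : (k : ℕ) < m + r)
    (x : Fin n → ℝ) :
    (Gmat A P Z).mulVec x k = -(Zᵀ.mulVec (P.mulVec x) ⟨(k : ℕ) - m, by omega⟩) := by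
  have hrhs : Zᵀ.mulVec (P.mulVec x) (⟨(k : ℕ) - m, by omega⟩ : Fin r)
      = ∑ l : Fin q, Z l ⟨(k : ℕ) - m, by omega⟩ * ∑ j : Fin n, P l j * x j := by
    unfold Matrix.mulVec dotProduct Matrix.transpose
    simp only [Matrix.of_apply]
  have hlhs : (Gmat A P Z).mulVec x k
      = ∑ j : Fin n, -(∑ l : Fin q, Z l ⟨(k : ℕ) - m, by omega⟩ * (P l j * x j)) := by
    unfold Matrix.mulVec dotProduct Gmat
    refine Finset.sum_congr rfl fun j _ => ?_
    simp only [dif_neg hk1, dif_pos hk2]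
    rw [neg_mul, Finset.sum_mul]
    congr 1
    exact Finset.sum_congr rfl fun l _ => by ring
  rw [hlhs, hrhs, Finset.sum_neg_distrib]
  congr 1
  rw [Finset.sum_comm]
  exact Finset.sum_congr rfl fun l _ => (Finset.mul_sum _ _ _).symm

lemma H_row2 (k : Fin (m + r + 1)) (hk1 : ¬ (k : ℕ) < m) (hk2 : (k : ℕ) < m + r)
    (y : Fin (q + 1) → ℝ) :
    (Hmat b Z).mulVec y k = Zᵀ.mulVec (projq y) ⟨(k : ℕ) - m, by omega⟩ := by
  unfold Matrix.mulVec dotProduct Hmat Matrix.transpose projq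
  simp only [Matrix.of_apply]
  rw [Fin.sum_univ_castSucc]
  have hlastc : ¬ (((Fin.last q) : ℕ) < q) := by simp
  simp only [dif_neg hk1, dif_pos hk2, dif_neg hlastc, zero_mul, add_zero]
  refine Finset.sum_congr rfl fun j _ => ?_
  have hj : ((j.castSucc : Fin (q + 1)) : ℕ) < q := by simp
  simp only [dif_pos hj]
  have he : (⟨((j.castSucc : Fin (q + 1)) : ℕ), hj⟩ : Fin q) = j := by ext; simp
  rw [he]

lemma G_row3 (k : Fin (m + r + 1)) (hk2 : ¬ (k : ℕ) < m + r) (x : Fin n → ℝ) :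
    (Gmat A P Z).mulVec x k = 0 := by
  unfold Matrix.mulVec dotProduct Gmat
  refine Finset.sum_eq_zero fun j _ => ?_
  simp only [dif_neg (show ¬ (k : ℕ) < m by omega), dif_neg hk2, zero_mul]

lemma H_row3 (k : Fin (m + r + 1)) (hk2 : ¬ (k : ℕ) < m + r) (y : Fin (q + 1) → ℝ) :
    (Hmat b Z).mulVec y k = y (Fin.last q) := by
  unfold Matrix.mulVec dotProduct Hmat
  rw [Fin.sum_univ_castSucc]
  have h1 : ∀ j : Fin q, ¬ ((j.castSucc : ℕ) = q) := fun j => by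
    have := j.isLt; simp only [Fin.coe_castSucc]; omega
  rw [Finset.sum_eq_zero fun j _ => by
    simp only [dif_neg (show ¬ (k : ℕ) < m by omega), dif_neg hk2, if_neg (h1 j), zero_mul]]
  simp only [dif_neg (show ¬ (k : ℕ) < m by omega), dif_neg hk2,
    if_pos (show ((Fin.last q : Fin (q+1)) : ℕ) = q by simp)]
  ring

lemma K_char (y : Fin (q + 1) → ℝ) :
    (∃ x : Fin n → ℝ, 0 ≤ (Gmat A P Z).mulVec x + (Hmat b Z).mulVec y) ↔
      (∃ x : Fin n → ℝ,
        (∀ i : Fin m, y (Fin.last q) * b i ≤ A.mulVec x i) ∧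
        (∀ l : Fin r, Zᵀ.mulVec (P.mulVec x) l ≤ Zᵀ.mulVec (projq y) l) ∧
        0 ≤ y (Fin.last q)) := by
  constructor
  · rintro ⟨x, hx⟩
    rw [Pi.le_def] at hx
    refine ⟨x, fun i => ?_, fun l => ?_, ?_⟩
    · have h := hx ⟨(i : ℕ), by omega⟩
      rw [Pi.add_apply, Pi.zero_apply, G_row1 A P Z _ i.isLt, H_row1 Z b _ i.isLt] at h
      have he : (⟨(i : ℕ), i.isLt⟩ : Fin m) = i := by ext; rfl
      rw [he] at h
      linarith
    · have hk1 : ¬ ((⟨m + (l : ℕ), by omega⟩ : Fin (m + r + 1)) : ℕ) < m := by simp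
      have hk2 : ((⟨m + (l : ℕ), by omega⟩ : Fin (m + r + 1)) : ℕ) < m + r := by
        simp
      have h := hx ⟨m + (l : ℕ), by omega⟩
      rw [Pi.add_apply, Pi.zero_apply, G_row2 A P Z _ hk1 hk2, H_row2 Z b _ hk1 hk2] at h
      have he : (⟨((⟨m + (l : ℕ), by omega⟩ : Fin (m + r + 1)) : ℕ) - m, by omega⟩ : Fin r) = l := by
        ext; simp
      rw [he] at h
      linarith
    · have hk2 : ¬ ((⟨m + r, by omega⟩ : Fin (m + r + 1)) : ℕ) < m + r := by simp
      have h := hx ⟨m + r, by omega⟩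
      rw [Pi.add_apply, Pi.zero_apply, G_row3 A P Z _ hk2, H_row3 Z b _ hk2] at h
      linarith
  · rintro ⟨x, h1, h2, h3⟩
    refine ⟨x, ?_⟩
    rw [Pi.le_def]
    intro k
    rw [Pi.add_apply, Pi.zero_apply]
    by_cases hk1 : (k : ℕ) < m
    · rw [G_row1 A P Z _ hk1, H_row1 Z b _ hk1]
      have := h1 ⟨(k : ℕ), hk1⟩
      linarith
    · by_cases hk2 : (k : ℕ) < m + r
      · rw [G_row2 A P Z _ hk1 hk2, H_row2 Z b _ hk1 hk2]
        have := h2 ⟨(k : ℕ) - m, by omega⟩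
        linarith
      · rw [G_row3 A P Z _ hk2, H_row3 Z b _ hk2]
        linarith

end Rows

/-- `K = cl cone (𝒫 × {1})`. -/
theorem stmt0
    (m n q r : ℕ) (hm : 0 < m) (hn : 0 < n) (hq : 0 < q) (hr : 0 < r)
    (A : Matrix (Fin m) (Fin n) ℝ) (P : Matrix (Fin q) (Fin n) ℝ)
    (Z : Matrix (Fin q) (Fin r) ℝ) (b : Fin m → ℝ)
    (C : Set (Fin q → ℝ)) (hC : C = {y | 0 ≤ Zᵀ.mulVec y})
    (hCpointed : C ∩ -C = {0}) (hCnontriv : C ≠ {0})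
    (S : Set (Fin n → ℝ)) (hS : S = {x | b ≤ A.mulVec x}) (hSne : S.Nonempty)
    (UpImg : Set (Fin q → ℝ)) (hUp : UpImg = P.mulVec '' S + C)
    (K : Set (Fin (q + 1) → ℝ))
    (hK : K = {y | ∃ x : Fin n → ℝ, 0 ≤ (Gmat A P Z).mulVec x + (Hmat b Z).mulVec y}) :
    K = closure (coneOf (lift1 '' UpImg)) := by
  subst hK hUp hS hC
  -- a convenient description of K
  have hKQ : {y : Fin (q+1) → ℝ |
        ∃ x : Fin n → ℝ, 0 ≤ (Gmat A P Z).mulVec x + (Hmat b Z).mulVec y}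
      = {y : Fin (q+1) → ℝ | ∃ x : Fin n → ℝ,
          (∀ i : Fin m, y (Fin.last q) * b i ≤ A.mulVec x i) ∧
          (∀ l : Fin r, Zᵀ.mulVec (P.mulVec x) l ≤ Zᵀ.mulVec (projq y) l) ∧
          0 ≤ y (Fin.last q)} := by
    ext y; exact K_char A P Z b y
  set UpImg : Set (Fin q → ℝ) :=
    P.mulVec '' {x | b ≤ A.mulVec x} + {y | 0 ≤ Zᵀ.mulVec y} with hUpImg
  set Q : Set (Fin (q+1) → ℝ) := {y : Fin (q+1) → ℝ | ∃ x : Fin n → ℝ,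
          (∀ i : Fin m, y (Fin.last q) * b i ≤ A.mulVec x i) ∧
          (∀ l : Fin r, Zᵀ.mulVec (P.mulVec x) l ≤ Zᵀ.mulVec (projq y) l) ∧
          0 ≤ y (Fin.last q)} with hQ
  -- Q is convex
  have hQconv : Convex ℝ Q := by
    rintro y1 ⟨x1, h11, h12, h13⟩ y2 ⟨x2, h21, h22, h23⟩ a c ha hc hac
    refine ⟨a • x1 + c • x2, fun i => ?_, fun l => ?_, ?_⟩
    · have e1 := mul_le_mul_of_nonneg_left (h11 i) ha
      have e2 := mul_le_mul_of_nonneg_left (h21 i) hc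
      simp only [Matrix.mulVec_add, Matrix.mulVec_smul, Pi.add_apply, Pi.smul_apply,
        smul_eq_mul]
      nlinarith
    · have e1 := mul_le_mul_of_nonneg_left (h12 l) ha
      have e2 := mul_le_mul_of_nonneg_left (h22 l) hc
      have hp : projq (a • y1 + c • y2) = a • projq y1 + c • projq y2 := rfl
      rw [hp]
      simp only [Matrix.mulVec_add, Matrix.mulVec_smul, Pi.add_apply, Pi.smul_apply,
        smul_eq_mul]
      nlinarith
    · have : (a • y1 + c • y2) (Fin.last q) = a * y1 (Fin.last q) + c * y2 (Fin.last q) := rfl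
      rw [this]
      nlinarith
  -- Q is closed under nonnegative scalar multiplication
  have hQsmul : ∀ l : ℝ, 0 ≤ l → ∀ y ∈ Q, l • y ∈ Q := by
    rintro l hl y ⟨x, h1, h2, h3⟩
    refine ⟨l • x, fun i => ?_, fun ll => ?_, ?_⟩
    · have e1 := mul_le_mul_of_nonneg_left (h1 i) hl
      simp only [Matrix.mulVec_smul, Pi.smul_apply, smul_eq_mul]
      nlinarith
    · have e1 := mul_le_mul_of_nonneg_left (h2 ll) hl
      have hp : projq (l • y) = l • projq y := rfl
      rw [hp]
      simp only [Matrix.mulVec_smul, Pi.smul_apply, smul_eq_mul]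
      nlinarith
    · have : (l • y) (Fin.last q) = l * y (Fin.last q) := rfl
      rw [this]
      nlinarith
  -- the lifted upper image is contained in Q
  have hlift : lift1 '' UpImg ⊆ Q := by
    rintro - ⟨w, hw, rfl⟩
    obtain ⟨-, ⟨x0, hx0, rfl⟩, cc, hcc, rfl⟩ := Set.mem_add.mp hw
    have hlast : (lift1 (P.mulVec x0 + cc)) (Fin.last q) = 1 := by
      simp [lift1]
    have hproj : projq (lift1 (P.mulVec x0 + cc)) = P.mulVec x0 + cc := by
      funext i; simp [lift1, projq]
    refine ⟨x0, fun i => ?_, fun l => ?_, ?_⟩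
    · rw [hlast, one_mul]
      exact hx0 i
    · rw [hproj, Matrix.mulVec_add]
      have := hcc l
      simp only [Pi.zero_apply, Pi.add_apply] at this ⊢
      linarith [this]
    · rw [hlast]; norm_num
  -- hence the cone over it is contained in Q
  have hcone : coneOf (lift1 '' UpImg) ⊆ Q := by
    rintro - ⟨l, hl, z, hz, rfl⟩
    exact hQsmul l hl z (convexHull_min hlift hQconv hz)
  -- K is closed (Fourier–Motzkin elimination)
  have hKclosed : IsClosed {y : Fin (q+1) → ℝ |
      ∃ x : Fin n → ℝ, 0 ≤ (Gmat A P Z).mulVec x + (Hmat b Z).mulVec y} := by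
    set f : Fin (m + r + 1) → ((Fin n → ℝ) × (Fin (q+1) → ℝ)) →ₗ[ℝ] ℝ :=
      fun i => (LinearMap.proj i).comp
        ((Matrix.mulVecLin (Gmat A P Z)).coprod (Matrix.mulVecLin (Hmat b Z))) with hf
    have heq : {y : Fin (q+1) → ℝ |
          ∃ x : Fin n → ℝ, 0 ≤ (Gmat A P Z).mulVec x + (Hmat b Z).mulVec y}
        = {y : Fin (q+1) → ℝ | ∃ x, ∀ i, 0 ≤ f i (x, y)} := by
      ext y
      simp only [Set.mem_setOf_eq, hf, LinearMap.comp_apply, LinearMap.coprod_apply,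
        Matrix.mulVecLin_apply, LinearMap.proj_apply, Pi.le_def, Pi.add_apply, Pi.zero_apply]
    rw [heq]
    exact fm_closed f
  apply Set.Subset.antisymm
  · -- K ⊆ closure (cone (lift1 '' UpImg))
    intro y hy
    rw [hKQ] at hy
    obtain ⟨x, h1, h2, h3⟩ := hy
    rcases eq_or_lt_of_le h3 with ht0 | htpos
    · -- y_{q+1} = 0 : approximate
      obtain ⟨x0, hx0⟩ := hSne
      have hx0' : ∀ i, b i ≤ A.mulVec x0 i := fun i => hx0 i
      have hAx : ∀ i, 0 ≤ A.mulVec x i := by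
        intro i; have := h1 i; rw [← ht0, zero_mul] at this; linarith
      refine mem_closure_of_tendsto (b := Filter.atTop) (f := fun k : ℕ =>
          ((k:ℝ)+1)⁻¹ • lift1 (P.mulVec x0 + ((k:ℝ)+1) • projq y)) ?_
        (Filter.Eventually.of_forall fun k => ?_)
      · rw [tendsto_pi_nhds]
        intro j
        induction j using Fin.lastCases with
        | last =>
          have hval : ∀ k : ℕ,
              (((k:ℝ)+1)⁻¹ • lift1 (P.mulVec x0 + ((k:ℝ)+1) • projq y)) (Fin.last q)
                = 1 / ((k:ℝ)+1) := by
            intro k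
            simp [lift1, one_div]
          rw [← ht0]
          exact tendsto_one_div_add_atTop_nhds_zero_nat.congr fun k => (hval k).symm
        | cast j =>
          have hval : ∀ k : ℕ,
              (((k:ℝ)+1)⁻¹ • lift1 (P.mulVec x0 + ((k:ℝ)+1) • projq y)) j.castSucc
                = (1 / ((k:ℝ)+1)) * P.mulVec x0 j + y j.castSucc := by
            intro k
            have hne : ((k:ℝ)+1) ≠ 0 := by positivity
            simp only [Pi.smul_apply, lift1, Fin.snoc_castSucc, Pi.add_apply, Pi.smul_apply,
              smul_eq_mul, one_div]
            field_simp
            ring_nf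
            rfl
          have hlim : Filter.Tendsto (fun k : ℕ => (1 / ((k:ℝ)+1)) * P.mulVec x0 j
              + y j.castSucc) Filter.atTop (nhds (0 * P.mulVec x0 j + y j.castSucc)) :=
            (tendsto_one_div_add_atTop_nhds_zero_nat.mul_const _).add tendsto_const_nhds
          rw [zero_mul, zero_add] at hlim
          exact hlim.congr fun k => (hval k).symm
      · -- each term is in the cone
        have hk0 : (0:ℝ) ≤ ((k:ℝ)+1)⁻¹ := by positivity
        have hk1 : (0:ℝ) ≤ ((k:ℝ)+1) := by positivity
        refine ⟨((k:ℝ)+1)⁻¹, hk0, lift1 (P.mulVec x0 + ((k:ℝ)+1) • projq y),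
          subset_convexHull ℝ _ ⟨P.mulVec x0 + ((k:ℝ)+1) • projq y, ?_, rfl⟩, rfl⟩
        refine Set.mem_add.mpr ⟨P.mulVec (x0 + ((k:ℝ)+1) • x),
          ⟨x0 + ((k:ℝ)+1) • x, fun i => ?_, rfl⟩,
          ((k:ℝ)+1) • (projq y - P.mulVec x), ?_, ?_⟩
        · simp only [Matrix.mulVec_add, Matrix.mulVec_smul, Pi.add_apply, Pi.smul_apply,
            smul_eq_mul]
          have := mul_nonneg hk1 (hAx i)
          have := hx0' i
          linarith
        · intro l
          rw [Matrix.mulVec_smul, Matrix.mulVec_sub]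
          simp only [Pi.zero_apply, Pi.smul_apply, Pi.sub_apply, smul_eq_mul]
          have := h2 l
          exact mul_nonneg hk1 (by linarith)
        · rw [Matrix.mulVec_add, Matrix.mulVec_smul, smul_sub]
          abel
    · -- y_{q+1} > 0 : the point is itself in the cone
      apply subset_closure
      have hne : y (Fin.last q) ≠ 0 := ne_of_gt htpos
      refine ⟨y (Fin.last q), le_of_lt htpos,
        lift1 ((y (Fin.last q))⁻¹ • projq y),
        subset_convexHull ℝ _ ⟨(y (Fin.last q))⁻¹ • projq y, ?_, rfl⟩, ?_⟩
      · refine Set.mem_add.mpr ⟨P.mulVec ((y (Fin.last q))⁻¹ • x),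
          ⟨(y (Fin.last q))⁻¹ • x, fun i => ?_, rfl⟩,
          (y (Fin.last q))⁻¹ • (projq y - P.mulVec x), ?_, ?_⟩
        · rw [Matrix.mulVec_smul]
          have e1 := mul_le_mul_of_nonneg_left (h1 i) (inv_nonneg.mpr (le_of_lt htpos))
          rw [← mul_assoc, inv_mul_cancel₀ hne, one_mul] at e1
          simpa using e1
        · intro l
          rw [Matrix.mulVec_smul, Matrix.mulVec_sub]
          simp only [Pi.zero_apply, Pi.smul_apply, Pi.sub_apply, smul_eq_mul]
          have := h2 l
          exact mul_nonneg (inv_nonneg.mpr (le_of_lt htpos)) (by linarith)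
        · rw [Matrix.mulVec_smul, smul_sub]
          abel
      · funext j
        induction j using Fin.lastCases with
        | last =>
          simp [lift1]
        | cast j =>
          simp only [Pi.smul_apply, lift1, Fin.snoc_castSucc, smul_eq_mul]
          rw [← mul_assoc, mul_inv_cancel₀ hne, one_mul]
          rfl
  · -- closure (cone …) ⊆ K
    apply closure_minimal _ hKclosed
    intro z hz
    rw [hKQ]
    exact hcone hz
end
end

section
/- Assume T ≠ ∅ and define K* := {w ∈ ℝ^{q+1} : ∃u ∈ ℝ^{m+r+1}, u ≥ 0, w = −Hᵀu, Gᵀu = 0}. Then K* = cl(cone(M[𝒟 × {1}])), where M[𝒟 × {1}] = {M(d,1) : d ∈ 𝒟}. -/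
open Matrix Set Pointwise

noncomputable section

/-!
In block coordinates `u = (x, y, t)`, `K* = {(-Zy, bᵀx - t) : x, y, t ≥ 0, Aᵀx = PᵀZy}`. It is a
linear image of a polyhedral cone, hence closed (conic Carathéodory). The functional
`ℓ w = -cᵀw`, `c = (c̄, 0)`, is nonnegative on `K*` since `c̄ ∈ C`, and a direct computation shows
that `M[𝒟 × {1}]` is exactly the slice `K* ∩ {ℓ = 1}`, which is nonempty because `T` is. Finally,
a closed cone on which `ℓ ≥ 0` is the closed conic hull of its slice `{ℓ = 1}`: points with
`ℓ > 0` are multiples of slice points, and a point `w` with `ℓ w = 0` is the limit of `w + εe`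
for any slice point `e`.
-/

section ConicCaratheodory

variable {ι E : Type*}

def vanishingOff (t : Set ι) : Submodule ℝ (ι → ℝ) := Submodule.pi tᶜ fun _ => ⊥

lemma mem_vanishingOff {t : Set ι} {c : ι → ℝ} : c ∈ vanishingOff t ↔ ∀ i ∉ t, c i = 0 := by
  simp [vanishingOff, Submodule.mem_pi]

/-- Moving from `c` against `g` until the first coordinate hits zero. -/
lemma exists_sub_smul_nonneg_mem_vanishingOff_erase [DecidableEq ι] {t : Finset ι} {c g : ι → ℝ}
    (hc : 0 ≤ c) (hct : c ∈ vanishingOff (t : Set ι)) (hgt : g ∈ vanishingOff (t : Set ι))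
    (hpos : ∃ i, 0 < g i) :
    ∃ j ∈ t, ∃ τ : ℝ, 0 ≤ c - τ • g ∧ c - τ • g ∈ vanishingOff (t.erase j : Set ι) := by
  rw [mem_vanishingOff] at hct hgt
  have mem_t {i} (hi : 0 < g i) : i ∈ t := by_contra fun h => hi.ne' (hgt i h)
  obtain ⟨i, hi⟩ := hpos
  obtain ⟨j, hj, hmin⟩ := Finset.exists_min_image (t.filter (0 < g ·)) (fun i => c i / g i)
    ⟨i, Finset.mem_filter.2 ⟨mem_t hi, hi⟩⟩
  obtain ⟨hjt, hgj⟩ := Finset.mem_filter.1 hj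
  refine ⟨j, hjt, c j / g j, fun i => ?_, mem_vanishingOff.2 fun i hi => ?_⟩
  · simp only [Pi.zero_apply, Pi.sub_apply, Pi.smul_apply, smul_eq_mul, sub_nonneg]
    rcases le_or_gt (g i) 0 with hgi | hgi
    · exact (mul_nonpos_of_nonneg_of_nonpos (div_nonneg (hc j) hgj.le) hgi).trans (hc i)
    · exact (le_div_iff₀ hgi).1 (hmin i (Finset.mem_filter.2 ⟨mem_t hgi, hgi⟩))
  · simp only [Pi.sub_apply, Pi.smul_apply, smul_eq_mul]
    rcases eq_or_ne i j with rfl | hij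
    · rw [div_mul_cancel₀ _ hgj.ne', sub_self]
    · have hit : i ∉ t := fun h => hi (Finset.mem_erase.2 ⟨hij, h⟩)
      simp [hgt i hit, hct i hit]

variable [Fintype ι] [AddCommGroup E] [Module ℝ E]

/-- Conic Carathéodory: a nonnegative preimage can be chosen with support on which `f` is
injective. -/
lemma exists_ker_inf_vanishingOff_eq_bot_and_map_eq (f : (ι → ℝ) →ₗ[ℝ] E) {c : ι → ℝ}
    (hc : 0 ≤ c) :
    ∃ t : Finset ι, LinearMap.ker f ⊓ vanishingOff (t : Set ι) = ⊥ ∧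
      ∃ c' ∈ vanishingOff (t : Set ι), 0 ≤ c' ∧ f c' = f c := by
  classical
  suffices ∀ t : Finset ι, ∀ c, 0 ≤ c → c ∈ vanishingOff (t : Set ι) →
      ∃ t' : Finset ι, LinearMap.ker f ⊓ vanishingOff (t' : Set ι) = ⊥ ∧
        ∃ c' ∈ vanishingOff (t' : Set ι), 0 ≤ c' ∧ f c' = f c from
    this Finset.univ c hc (mem_vanishingOff.2 fun i hi => absurd (Finset.mem_univ i) hi)
  intro t
  induction t using Finset.strongInduction with
  | H t ih =>
  intro c hc hct
  by_cases hker : LinearMap.ker f ⊓ vanishingOff (t : Set ι) = ⊥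
  · exact ⟨t, hker, c, hct, hc, rfl⟩
  obtain ⟨g, hg, hg0⟩ := (Submodule.ne_bot_iff _).1 hker
  obtain ⟨hgker, hgt⟩ := Submodule.mem_inf.1 hg
  obtain ⟨g, hgker, hgt, hpos⟩ :
      ∃ g ∈ LinearMap.ker f, g ∈ vanishingOff (t : Set ι) ∧ ∃ i, 0 < g i := by
    obtain ⟨i, hi⟩ := Function.ne_iff.1 hg0
    rcases hi.lt_or_gt with h | h
    · exact ⟨-g, neg_mem hgker, neg_mem hgt, i, by simpa using h⟩
    · exact ⟨g, hgker, hgt, i, h⟩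
  obtain ⟨j, hj, τ, hnonneg, hmem⟩ :=
    exists_sub_smul_nonneg_mem_vanishingOff_erase hc hct hgt hpos
  obtain ⟨t', ht', c', hc't', hc', hfc'⟩ := ih _ (Finset.erase_ssubset hj) _ hnonneg hmem
  refine ⟨t', ht', c', hc't', hc', ?_⟩
  rw [hfc', map_sub, map_smul, LinearMap.mem_ker.1 hgker, smul_zero, sub_zero]

variable [TopologicalSpace E] [IsTopologicalAddGroup E] [ContinuousSMul ℝ E] [T2Space E]

lemma isClosed_image_nonneg_inter (f : (ι → ℝ) →ₗ[ℝ] E) {V : Submodule ℝ (ι → ℝ)}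
    (hV : LinearMap.ker f ⊓ V = ⊥) : IsClosed (f '' ({c | 0 ≤ c} ∩ V)) := by
  have hinj : LinearMap.ker (f.domRestrict V) = ⊥ := by
    rw [LinearMap.ker_eq_bot']
    intro x hx
    have : (x : ι → ℝ) ∈ LinearMap.ker f ⊓ V := ⟨hx, x.2⟩
    rw [hV] at this
    exact Subtype.ext this
  have himage : f '' ({c | 0 ≤ c} ∩ V) = f.domRestrict V '' {x | 0 ≤ (x : ι → ℝ)} := by
    ext y
    simp [and_assoc]
  rw [himage]
  exact (LinearMap.isClosedEmbedding_of_injective hinj).isClosedMap _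
    (isClosed_le continuous_const continuous_subtype_val)

theorem isClosed_image_nonneg (f : (ι → ℝ) →ₗ[ℝ] E) : IsClosed (f '' {c | 0 ≤ c}) := by
  have hunion : f '' {c | 0 ≤ c} =
      ⋃ t ∈ {t : Finset ι | LinearMap.ker f ⊓ vanishingOff (t : Set ι) = ⊥},
        f '' ({c | 0 ≤ c} ∩ vanishingOff (t : Set ι)) := by
    refine Subset.antisymm ?_ (iUnion₂_subset fun t _ => image_mono inter_subset_left)
    rintro _ ⟨c, hc, rfl⟩
    obtain ⟨t, ht, c', hc't, hc', hfc'⟩ := exists_ker_inf_vanishingOff_eq_bot_and_map_eq f hc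
    exact mem_biUnion ht ⟨c', ⟨hc', hc't⟩, hfc'⟩
  rw [hunion]
  exact (Set.toFinite _).isClosed_biUnion fun t ht => isClosed_image_nonneg_inter f ht

end ConicCaratheodory

section Cones

variable {E : Type*} [AddCommGroup E] [Module ℝ E]

lemma coneOf_subset {K : PointedCone ℝ E} {B : Set E} (h : B ⊆ K) : coneOf B ⊆ K := by
  rintro _ ⟨l, hl, x, hx, rfl⟩
  exact K.smul_mem hl (convexHull_min h K.convex hx)

theorem closure_coneOf_slice_eq [TopologicalSpace E] [ContinuousAdd E] [ContinuousSMul ℝ E]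
    {K : PointedCone ℝ E} (hK : IsClosed (K : Set E)) {ℓ : E →ₗ[ℝ] ℝ}
    (hℓ : ∀ x ∈ K, 0 ≤ ℓ x) (hslice : {x ∈ K | ℓ x = 1}.Nonempty) :
    closure (coneOf {x ∈ K | ℓ x = 1}) = K := by
  refine Subset.antisymm (closure_minimal (coneOf_subset fun x hx => hx.1) hK) fun x hx => ?_
  obtain ⟨e, heK, he⟩ := hslice
  have mem_coneOf : ∀ y ∈ K, 0 < ℓ y → y ∈ coneOf {x ∈ K | ℓ x = 1} := fun y hy hℓy =>
    ⟨ℓ y, hℓy.le, (ℓ y)⁻¹ • y,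
      subset_convexHull ℝ _ ⟨K.smul_mem (inv_nonneg.2 hℓy.le) hy, by simp [hℓy.ne']⟩,
      by rw [smul_smul, mul_inv_cancel₀ hℓy.ne', one_smul]⟩
  have htendsto : Filter.Tendsto (fun ε : ℝ => x + ε • e) (nhdsWithin 0 (Ioi 0)) (nhds x) := by
    have hcont : Continuous fun ε : ℝ => x + ε • e := by fun_prop
    simpa using (hcont.tendsto 0).mono_left nhdsWithin_le_nhds
  refine mem_closure_of_tendsto htendsto (eventually_nhdsWithin_of_forall fun ε hε => ?_)
  refine mem_coneOf _ (K.add_mem hx (K.smul_mem (le_of_lt hε) heK)) ?_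
  rw [map_add, map_smul, he, smul_eq_mul, mul_one]
  exact add_pos_of_nonneg_of_pos (hℓ x hx) hε

end Cones

section Blocks

lemma snoc_dotProduct_snoc {d : ℕ} (x y : Fin d → ℝ) (a c : ℝ) :
    (Fin.snoc x a : Fin (d + 1) → ℝ) ⬝ᵥ Fin.snoc y c = x ⬝ᵥ y + a * c := by
  simp [dotProduct, Fin.sum_univ_castSucc]

variable {m n q r : ℕ}

lemma exists_eq_snoc_append (u : Fin (m + r + 1) → ℝ) :
    ∃ x y t, u = Fin.snoc (Fin.append x y) t :=
  ⟨_, _, _, by rw [Fin.append_castAdd_natAdd, Fin.snoc_init_self]⟩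

lemma snoc_append_nonneg_iff {x : Fin m → ℝ} {y : Fin r → ℝ} {t : ℝ} :
    0 ≤ (Fin.snoc (Fin.append x y) t : Fin (m + r + 1) → ℝ) ↔ 0 ≤ x ∧ 0 ≤ y ∧ 0 ≤ t := by
  simp [Pi.le_def, Fin.forall_fin_succ', Fin.forall_fin_add, and_assoc]

lemma dotProduct_snoc_append (g : Fin (m + r + 1) → ℝ) (x : Fin m → ℝ) (y : Fin r → ℝ)
    (t : ℝ) :
    g ⬝ᵥ Fin.snoc (Fin.append x y) t =
      (fun i => g (Fin.castAdd r i).castSucc) ⬝ᵥ x +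
        (fun k => g (Fin.natAdd m k).castSucc) ⬝ᵥ y + g (Fin.last _) * t := by
  simp [dotProduct, Fin.sum_univ_castSucc, Fin.sum_univ_add]

lemma neg_Hmat_transpose_mulVec_snoc_append (b : Fin m → ℝ) (Z : Matrix (Fin q) (Fin r) ℝ)
    (x : Fin m → ℝ) (y : Fin r → ℝ) (t : ℝ) :
    -((Hmat b Z)ᵀ *ᵥ Fin.snoc (Fin.append x y) t) = Fin.snoc (-(Z *ᵥ y)) (b ⬝ᵥ x - t) := by
  ext j
  simp only [Pi.neg_apply, mulVec, transpose_apply, dotProduct_snoc_append]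
  induction j using Fin.lastCases with
  | last => simp [Hmat, dotProduct]; ring
  | cast j => simp [Hmat, dotProduct, mulVec, j.isLt.ne]

lemma Gmat_transpose_mulVec_snoc_append (A : Matrix (Fin m) (Fin n) ℝ)
    (P : Matrix (Fin q) (Fin n) ℝ) (Z : Matrix (Fin q) (Fin r) ℝ)
    (x : Fin m → ℝ) (y : Fin r → ℝ) (t : ℝ) :
    (Gmat A P Z)ᵀ *ᵥ Fin.snoc (Fin.append x y) t = Aᵀ *ᵥ x - Pᵀ *ᵥ (Z *ᵥ y) := by
  ext j
  simp only [mulVec, transpose_apply, dotProduct_snoc_append]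
  simp [Gmat, dotProduct, mulVec, mul_apply, Finset.sum_mul, sub_eq_add_neg]
  exact Finset.sum_congr rfl fun _ _ => Finset.sum_congr rfl fun _ _ => by ring

end Blocks

section Kstar

variable {m n q r : ℕ} (A : Matrix (Fin m) (Fin n) ℝ) (P : Matrix (Fin q) (Fin n) ℝ)
  (Z : Matrix (Fin q) (Fin r) ℝ) (b : Fin m → ℝ)

/-- `K*`, as the preimage of the image of the orthant under `u ↦ (-Hᵀu, Gᵀu)` under
`w ↦ (w, 0)`; this form makes it visibly a closed cone. -/
def kstarCone : PointedCone ℝ (Fin (q + 1) → ℝ) :=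
  ((PointedCone.positive ℝ (Fin (m + r + 1) → ℝ)).map
    ((-(Hmat b Z)ᵀ.mulVecLin).prod (Gmat A P Z)ᵀ.mulVecLin)).comap
    (LinearMap.inl ℝ _ (Fin n → ℝ))

lemma coe_kstarCone : (kstarCone A P Z b : Set (Fin (q + 1) → ℝ)) =
    {w | ∃ u : Fin (m + r + 1) → ℝ, 0 ≤ u ∧
      w = -((Hmat b Z)ᵀ.mulVec u) ∧ (Gmat A P Z)ᵀ.mulVec u = 0} := by
  ext w
  simp [kstarCone, Prod.ext_iff, eq_comm, mulVec_transpose]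

lemma isClosed_kstarCone : IsClosed (kstarCone A P Z b : Set (Fin (q + 1) → ℝ)) := by
  rw [kstarCone, PointedCone.coe_comap, PointedCone.coe_map]
  exact (isClosed_image_nonneg _).preimage (LinearMap.continuous_of_finiteDimensional _)

lemma mem_kstarCone_iff {w : Fin (q + 1) → ℝ} :
    w ∈ kstarCone A P Z b ↔ ∃ x y t, 0 ≤ x ∧ 0 ≤ y ∧ 0 ≤ t ∧ Aᵀ *ᵥ x = Pᵀ *ᵥ (Z *ᵥ y) ∧
      w = Fin.snoc (-(Z *ᵥ y)) (b ⬝ᵥ x - t) := by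
  rw [← SetLike.mem_coe, coe_kstarCone]
  constructor
  · rintro ⟨u, hu, rfl, hG⟩
    obtain ⟨x, y, t, rfl⟩ := exists_eq_snoc_append u
    rw [snoc_append_nonneg_iff] at hu
    rw [Gmat_transpose_mulVec_snoc_append, sub_eq_zero] at hG
    exact ⟨x, y, t, hu.1, hu.2.1, hu.2.2, hG, neg_Hmat_transpose_mulVec_snoc_append b Z x y t⟩
  · rintro ⟨x, y, t, hx, hy, ht, hA, rfl⟩
    exact ⟨_, snoc_append_nonneg_iff.2 ⟨hx, hy, ht⟩,
      (neg_Hmat_transpose_mulVec_snoc_append b Z x y t).symm,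
      by rw [Gmat_transpose_mulVec_snoc_append, hA, sub_self]⟩

def sliceFunctional (cbar : Fin q → ℝ) : Module.Dual ℝ (Fin (q + 1) → ℝ) :=
  -dotProductBilin ℝ ℝ (Fin.snoc cbar 0)

lemma sliceFunctional_snoc (cbar x : Fin q → ℝ) (a : ℝ) :
    sliceFunctional cbar (Fin.snoc x a) = -(cbar ⬝ᵥ x) := by
  change -((Fin.snoc cbar 0 : Fin (q + 1) → ℝ) ⬝ᵥ Fin.snoc x a) = _
  rw [snoc_dotProduct_snoc, zero_mul, add_zero]

lemma sliceFunctional_nonneg {cbar : Fin q → ℝ} (hc : 0 ≤ Zᵀ *ᵥ cbar) {w : Fin (q + 1) → ℝ}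
    (hw : w ∈ kstarCone A P Z b) : 0 ≤ sliceFunctional cbar w := by
  obtain ⟨x, y, t, -, hy, -, -, rfl⟩ := (mem_kstarCone_iff A P Z b).1 hw
  rw [sliceFunctional_snoc, dotProduct_neg, neg_neg, dotProduct_mulVec, ← mulVec_transpose]
  exact dotProduct_nonneg_of_nonneg hc hy

end Kstar

section Slice

variable {m n q r : ℕ} (A : Matrix (Fin m) (Fin n) ℝ) (P : Matrix (Fin q) (Fin n) ℝ)
  (Z : Matrix (Fin q) (Fin r) ℝ) (b : Fin m → ℝ)

lemma sum_ite_lt_pred (hq : 0 < q) (f : Fin q → ℝ) :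
    (∑ j : Fin q, if (j : ℕ) < q - 1 then f j else 0) = ∑ j, f j - f (lastIdx q hq) := by
  have hsplit : ∀ j, f j = (if (j : ℕ) < q - 1 then f j else 0) +
      (if lastIdx q hq = j then f j else 0) := fun j => by
    have := j.isLt
    by_cases hj : (j : ℕ) < q - 1
    · rw [if_pos hj, if_neg (fun h => by simp [← h, lastIdx] at hj), add_zero]
    · rw [if_neg hj, if_pos (Fin.ext (by simp [lastIdx]; omega)), zero_add]
  conv_rhs => rw [Finset.sum_congr rfl fun j _ => hsplit j]
  simp [Finset.sum_add_distrib]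

lemma Mmap_lift1_Dmap_sub (hq : 0 < q) {cbar : Fin q → ℝ} (hcq : cbar (lastIdx q hq) = 1)
    {u : Fin m → ℝ} {w : Fin q → ℝ} (hw : cbar ⬝ᵥ w = 1) {s : Fin q → ℝ}
    (hs : s ∈ RstarSet q hq) :
    Mmap hq cbar (lift1 (Dmap b (u, w) - s)) = Fin.snoc (-w) (b ⬝ᵥ u - s (lastIdx q hq)) := by
  set d := Dmap b (u, w) - s
  have hfront : ∀ j : Fin q, (j : ℕ) < q - 1 → d j = w j := fun j hj => by
    simp [d, Dmap, hj, hs.1 j hj]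
  have hlast : d (lastIdx q hq) = b ⬝ᵥ u - s (lastIdx q hq) := by
    simp [d, Dmap, lastIdx]
  have hsum : (∑ k : Fin q, if (k : ℕ) < q - 1 then cbar k * d k else 0) =
      1 - w (lastIdx q hq) := by
    calc _ = ∑ k : Fin q, if (k : ℕ) < q - 1 then cbar k * w k else 0 :=
          Finset.sum_congr rfl fun k _ => by split_ifs with hk <;> simp [hfront k, hk]
      _ = 1 - w (lastIdx q hq) := by
          rw [sum_ite_lt_pred hq fun k => cbar k * w k, ← dotProduct, hw, hcq, one_mul]
  ext i
  induction i using Fin.lastCases with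
  | last =>
    have h₁ : ¬ q < q - 1 := by omega
    have h₂ : q ≠ q - 1 := by omega
    simp only [Mmap, Fin.val_last, h₁, h₂, if_false, lift1, Fin.snoc_castSucc, Fin.snoc_last,
      hlast]
  | cast j =>
    rcases lt_or_ge (j : ℕ) (q - 1) with hj | hj
    · simp [Mmap, lift1, hj, hfront]
    · obtain rfl : j = lastIdx q hq := Fin.ext (by simp [lastIdx]; omega)
      have hv : ((lastIdx q hq).castSucc : ℕ) = q - 1 := rfl
      simp only [Mmap, hv, lt_irrefl, if_false, if_true, lift1, Fin.snoc_castSucc, Fin.snoc_last,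
        Pi.neg_apply, hsum]
      ring

theorem image_Mmap_lift1_eq_slice (hq : 0 < q) {cbar : Fin q → ℝ}
    (hcq : cbar (lastIdx q hq) = 1) :
    (fun d => Mmap hq cbar (lift1 d)) '' (Dmap b '' Tset A P Z cbar - RstarSet q hq) =
      {w ∈ kstarCone A P Z b | sliceFunctional cbar w = 1} := by
  ext w
  constructor
  · rintro ⟨_, ⟨_, ⟨⟨u, w'⟩, ⟨v, hv, rfl, hA, hcw, hu⟩, rfl⟩, s, hs, rfl⟩, rfl⟩
    dsimp only at hA hcw hu
    show Mmap hq cbar (lift1 (Dmap b (u, Z *ᵥ v) - s)) ∈ _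
    rw [Mmap_lift1_Dmap_sub b hq hcq hcw hs]
    exact ⟨(mem_kstarCone_iff A P Z b).2 ⟨u, v, _, hu, hv, hs.2, hA, rfl⟩,
      by rw [sliceFunctional_snoc, dotProduct_neg, neg_neg, hcw]⟩
  · rintro ⟨hw, hℓ⟩
    obtain ⟨x, y, t, hx, hy, ht, hA, rfl⟩ := (mem_kstarCone_iff A P Z b).1 hw
    rw [sliceFunctional_snoc, dotProduct_neg, neg_neg] at hℓ
    have hs : Pi.single (lastIdx q hq) t ∈ RstarSet q hq :=
      ⟨fun i hi => Pi.single_eq_of_ne (fun h => by simp [h, lastIdx] at hi) _, by simpa using ht⟩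
    refine ⟨_, ⟨_, ⟨(x, Z *ᵥ y), ⟨y, hy, rfl, hA, hℓ, hx⟩, rfl⟩, _, hs, rfl⟩, ?_⟩
    exact (Mmap_lift1_Dmap_sub b hq hcq hℓ hs).trans (by rw [Pi.single_eq_same])

end Slice

theorem stmt3_general
    (m n q r : ℕ) (hq : 0 < q)
    (A : Matrix (Fin m) (Fin n) ℝ) (P : Matrix (Fin q) (Fin n) ℝ)
    (Z : Matrix (Fin q) (Fin r) ℝ) (b : Fin m → ℝ)
    (C : Set (Fin q → ℝ)) (hC : C = {y | 0 ≤ Zᵀ.mulVec y})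
    (cbar : Fin q → ℝ) (hcbar : cbar ∈ intrinsicInterior ℝ C)
    (hcq : cbar (lastIdx q hq) = 1)
    (T : Set ((Fin m → ℝ) × (Fin q → ℝ))) (hT : T = Tset A P Z cbar) (hTne : T.Nonempty)
    (LowImg : Set (Fin q → ℝ)) (hLow : LowImg = Dmap b '' T - RstarSet q hq)
    (Kstar : Set (Fin (q + 1) → ℝ))
    (hKstar : Kstar = {w | ∃ u : Fin (m + r + 1) → ℝ, 0 ≤ u ∧
      w = -((Hmat b Z)ᵀ.mulVec u) ∧ (Gmat A P Z)ᵀ.mulVec u = 0}) :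
    Kstar = closure (coneOf ((fun d => Mmap hq cbar (lift1 d)) '' LowImg)) := by
  subst hC hT hLow hKstar
  have hZc : 0 ≤ Zᵀ *ᵥ cbar := intrinsicInterior_subset hcbar
  have hslice := image_Mmap_lift1_eq_slice A P Z b hq hcq
  have hne : ((fun d => Mmap hq cbar (lift1 d)) ''
      (Dmap b '' Tset A P Z cbar - RstarSet q hq)).Nonempty :=
    ((hTne.image _).sub (⟨0, fun _ _ => rfl, le_rfl⟩ : (RstarSet q hq).Nonempty)).image _
  rw [hslice] at hne
  rw [hslice, ← coe_kstarCone]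
  exact (closure_coneOf_slice_eq (isClosed_kstarCone A P Z b)
    (fun w hw => sliceFunctional_nonneg A P Z b hZc hw) hne).symm

/-- `K* = cl cone (M[𝒟 × {1}])`. -/
theorem stmt3
    (m n q r : ℕ) (hm : 0 < m) (hn : 0 < n) (hq : 0 < q) (hr : 0 < r)
    (A : Matrix (Fin m) (Fin n) ℝ) (P : Matrix (Fin q) (Fin n) ℝ)
    (Z : Matrix (Fin q) (Fin r) ℝ) (b : Fin m → ℝ)
    (C : Set (Fin q → ℝ)) (hC : C = {y | 0 ≤ Zᵀ.mulVec y})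
    (hCpointed : C ∩ -C = {0}) (hCnontriv : C ≠ {0})
    (S : Set (Fin n → ℝ)) (hS : S = {x | b ≤ A.mulVec x}) (hSne : S.Nonempty)
    (cbar : Fin q → ℝ) (hcbar : cbar ∈ intrinsicInterior ℝ C)
    (hcq : cbar (lastIdx q hq) = 1)
    (T : Set ((Fin m → ℝ) × (Fin q → ℝ))) (hT : T = Tset A P Z cbar) (hTne : T.Nonempty)
    (LowImg : Set (Fin q → ℝ)) (hLow : LowImg = Dmap b '' T - RstarSet q hq)
    (Kstar : Set (Fin (q + 1) → ℝ))
    (hKstar : Kstar = {w | ∃ u : Fin (m + r + 1) → ℝ, 0 ≤ u ∧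
      w = -((Hmat b Z)ᵀ.mulVec u) ∧ (Gmat A P Z)ᵀ.mulVec u = 0}) :
    Kstar = closure (coneOf ((fun d => Mmap hq cbar (lift1 d)) '' LowImg)) :=
  stmt3_general m n q r hq A P Z b C hC cbar hcbar hcq T hT hTne LowImg hLow Kstar hKstar
end
end

section
/- Let B ⊆ ℝ^q be a polyhedron. Then Φ is an inclusion-invariant one-to-one map between the set of all nonempty faces F of B and the set of all faces E of Φ(B) with the property E ⊄ 0⁺B × {0} (inclusion-invariant means F₁ ⊆ F₂ ⟺ Φ(F₁) ⊆ Φ(F₂)); the inverse map is E ↦ p[E ∩ (B × {1})], where p(y) := (y₁,…,y_q); and for every nonempty face F of B one has dim Φ(F) = dim F + 1. -/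
open Matrix Set Pointwise

noncomputable section

/-! A closed convex set `C` is recovered from `Φ(C)`: a point `(z, t)` of `Φ(C)` is either
`t • (y, 1)` with `t > 0` and `y ∈ C`, or `(d, 0)` with `d ∈ 0⁺C`. Dehomogenizing at a base point
`x ∈ C`, i.e. sending `(z, t)` with `t ≤ 1` to `z + (1 - t) • x`, is affine and maps `Φ(C)` into
`C`. Rescaling two points of `Φ(B)` until their last coordinates are below `1` and dehomogenizing at
a point of a face `F` turns the face property of `Φ(F)` in `Φ(B)` into that of `F` in `B`, and the
same device shows that a face `E` of `Φ(B)` meeting `B × {1}` is `Φ` of `B ∩ lift1⁻¹(E)`. Faces of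
closed convex sets are closed in finite dimension, which gives `p[Φ(F) ∩ (B × {1})] = F`. Finally
`Φ(C)` spans the same space as `{0} ∪ (C × {1})`, and `0` is not in the affine hull of `C × {1}`,
whence `dim Φ(C) = dim C + 1`. -/

open Filter Topology

section Convexity

variable {V : Type*} [AddCommGroup V] [Module ℝ V]

lemma mem_coneOf_iff {S : Set V} (hS : Convex ℝ S) {p : V} :
    p ∈ coneOf S ↔ ∃ l : ℝ, 0 ≤ l ∧ ∃ x ∈ S, p = l • x := by
  rw [coneOf, hS.convexHull_eq]
  rfl

lemma smul_mem_coneOf {S : Set V} {p : V} (hp : p ∈ coneOf S) {c : ℝ} (hc : 0 ≤ c) :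
    c • p ∈ coneOf S := by
  obtain ⟨l, hl, x, hx, rfl⟩ := hp
  exact ⟨c * l, mul_nonneg hc hl, x, hx, smul_smul c l x⟩

lemma convex_coneOf (S : Set V) : Convex ℝ (coneOf S) := by
  rintro _ ⟨l₁, hl₁, x₁, hx₁, rfl⟩ _ ⟨l₂, hl₂, x₂, hx₂, rfl⟩ a b ha hb -
  have h₁ : 0 ≤ a * l₁ := mul_nonneg ha hl₁
  have h₂ : 0 ≤ b * l₂ := mul_nonneg hb hl₂
  rcases (add_nonneg h₁ h₂).eq_or_lt with hL | hL
  · obtain ⟨e₁, e₂⟩ := (add_eq_zero_iff_of_nonneg h₁ h₂).1 hL.symm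
    exact ⟨0, le_rfl, x₁, hx₁, by simp [smul_smul, e₁, e₂]⟩
  · refine ⟨a * l₁ + b * l₂, hL.le, (a * l₁ / (a * l₁ + b * l₂)) • x₁ +
      (b * l₂ / (a * l₁ + b * l₂)) • x₂, convex_convexHull ℝ S hx₁ hx₂ (by positivity)
      (by positivity) (by field_simp), ?_⟩
    simp only [smul_add, smul_smul, mul_div_cancel₀ _ hL.ne']

lemma coneOf_subset_span (S : Set V) : coneOf S ⊆ Submodule.span ℝ S := by
  rintro _ ⟨l, -, x, hx, rfl⟩
  exact Submodule.smul_mem _ l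
    (convexHull_min Submodule.subset_span (Submodule.span ℝ S).convex hx)

namespace IsFaceOf

variable {F B : Set V}

lemma subset (hF : IsFaceOf F B) : F ⊆ B := hF.2.1

lemma left_mem (hF : IsFaceOf F B) {y z : V} (hy : y ∈ B) (hz : z ∈ B) {l : ℝ} (h0 : 0 < l)
    (h1 : l < 1) (h : l • y + (1 - l) • z ∈ F) : y ∈ F :=
  (hF.2.2 y hy z hz l h0 h1 h).1

lemma mem_recCone_of_add_mem (hF : IsFaceOf F B) {x d : V} (hx : x ∈ F) (hd : d ∈ recCone B)
    (hxd : x + d ∈ F) : d ∈ recCone F := by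
  have hray : ∀ t : ℝ, 0 ≤ t → x + t • d ∈ F := by
    intro t ht
    rcases le_or_gt t 1 with ht1 | ht1
    · convert hF.1 hx hxd (sub_nonneg.2 ht1) ht (sub_add_cancel 1 t) using 1
      module
    · refine hF.left_mem (hd x (hF.subset hx) t ht) (hF.subset hx) (inv_pos.2 (by linarith))
        (inv_lt_one_of_one_lt₀ ht1) ?_
      convert hxd using 1
      match_scalars
      · field_simp
        ring
      · field_simp
  intro y hy t ht
  refine hF.left_mem (hd y (hF.subset hy) t ht) (hF.subset hx) one_half_pos one_half_lt_one ?_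
  convert hF.1 hy (hray t ht) one_half_pos.le one_half_pos.le (add_halves 1) using 1
  module

variable {E K : Set V}

lemma smul_mem (hE : IsFaceOf E K) (hK : ∀ p ∈ K, ∀ c : ℝ, 0 ≤ c → c • p ∈ K) {p : V}
    (hp : p ∈ E) {c : ℝ} (hc : 0 ≤ c) : c • p ∈ E := by
  have hpK := hE.subset hp
  have h0K : (0 : V) ∈ K := by simpa using hK p hpK 0 le_rfl
  have h0E : (0 : V) ∈ E := by
    refine (hE.2.2 _ (hK p hpK 2 zero_le_two) 0 h0K (1 / 2) one_half_pos one_half_lt_one ?_).2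
    convert hp using 1
    module
  rcases le_or_gt c 1 with hc1 | hc1
  · convert hE.1 hp h0E hc (sub_nonneg.2 hc1) (add_sub_cancel c 1) using 1
    module
  · refine hE.left_mem (hK p hpK c hc) h0K (inv_pos.2 (by linarith))
      (inv_lt_one_of_one_lt₀ hc1) ?_
    convert hp using 1
    match_scalars
    field_simp

lemma add_mem (hE : IsFaceOf E K) (hK : ∀ p ∈ K, ∀ c : ℝ, 0 ≤ c → c • p ∈ K) {p r : V}
    (hp : p ∈ E) (hr : r ∈ E) : p + r ∈ E := by
  convert hE.1 (hE.smul_mem hK hp zero_le_two) (hE.smul_mem hK hr zero_le_two)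
    one_half_pos.le one_half_pos.le (add_halves 1) using 1
  module

lemma inter_preimage {W : Type*} [AddCommGroup W] [Module ℝ W] (hE : IsFaceOf E K)
    {C : Set W} (hC : Convex ℝ C) (f : W →ᵃ[ℝ] V) (hf : MapsTo f C K) :
    IsFaceOf (C ∩ f ⁻¹' E) C := by
  refine ⟨hC.inter (hE.1.affine_preimage f), inter_subset_left, ?_⟩
  rintro y hy z hz l hl0 hl1 ⟨-, hmem⟩
  rw [mem_preimage, Convex.combo_affine_apply (add_sub_cancel l 1)] at hmem
  obtain ⟨hyE, hzE⟩ := hE.2.2 _ (hf hy) _ (hf hz) l hl0 hl1 hmem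
  exact ⟨⟨hy, hyE⟩, ⟨hz, hzE⟩⟩

end IsFaceOf

end Convexity

lemma IsFaceOf.isClosed {V : Type*} [NormedAddCommGroup V] [NormedSpace ℝ V]
    [FiniteDimensional ℝ V] {F B : Set V} (hB : IsClosed B) (hF : IsFaceOf F B) :
    IsClosed F := by
  refine isClosed_of_closure_subset fun y hy => ?_
  obtain ⟨_, x, hx, rfl⟩ := (closure_nonempty_iff.1 ⟨y, hy⟩).intrinsicInterior hF.1
  have hxF : (x : V) ∈ F := (interior_subset hx : x ∈ Subtype.val ⁻¹' F)
  have hyA : y ∈ affineSpan ℝ F :=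
    closure_minimal (subset_affineSpan ℝ F) (affineSpan ℝ F).closed_of_finiteDimensional hy
  -- Prolong the segment from `y` to the relative interior point `x` slightly beyond `x`.
  let w : ℝ → affineSpan ℝ F := fun δ =>
    ⟨δ • ((x : V) - y) + x, AffineSubspace.smul_vsub_vadd_mem _ δ x.2 hyA x.2⟩
  have hw : Tendsto w (𝓝[>] 0) (𝓝 x) := by
    refine (Continuous.tendsto' ?_ 0 x (by simp [w])).mono_left nhdsWithin_le_nhds
    exact (by fun_prop : Continuous fun δ : ℝ => δ • ((x : V) - y) + x).subtype_mk _
  obtain ⟨δ, hδw, hδ⟩ :=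
    ((hw.eventually (isOpen_interior.mem_nhds hx)).and self_mem_nhdsWithin).exists
  have hwF : (w δ : V) ∈ F := (interior_subset hδw : w δ ∈ Subtype.val ⁻¹' F)
  have hδ : (0 : ℝ) < δ := hδ
  refine hF.left_mem (l := δ / (1 + δ)) (closure_minimal hF.subset hB hy) (hF.subset hwF)
    (div_pos hδ (by positivity)) ((div_lt_one (by positivity)).2 (by linarith)) ?_
  convert hxF using 1
  simp only [w]
  match_scalars <;> field_simp <;> ring

lemma IsClosed.mem_of_mem_closure_of_mapsTo {X Y : Type*} [TopologicalSpace X]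
    [TopologicalSpace Y] {C : Set Y} (hC : IsClosed C) {S U : Set X} {g : X → Y} {p : X}
    (hp : p ∈ closure S) (hU : IsOpen U) (hpU : p ∈ U) (hg : ContinuousAt g p)
    (h : MapsTo g (U ∩ S) C) : g p ∈ C :=
  hC.closure_subset (hg.continuousWithinAt.mem_closure (hU.inter_closure ⟨hpU, hp⟩) h)

namespace IsPolyhedron

variable {d : ℕ} {B : Set (Fin d → ℝ)}

lemma convex (hB : IsPolyhedron B) : Convex ℝ B := by
  obtain ⟨k, W, v, rfl⟩ := hB
  exact (convex_Ici v).linear_preimage W.mulVecLin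

lemma isClosed (hB : IsPolyhedron B) : IsClosed B := by
  obtain ⟨k, W, v, rfl⟩ := hB
  exact isClosed_Ici.preimage W.mulVecLin.continuous_of_finiteDimensional

end IsPolyhedron

section Lifts

variable {q : ℕ}

@[simp] lemma lift1_castSucc (y : Fin q → ℝ) (i : Fin q) : lift1 y i.castSucc = y i := by
  simp [lift1]

@[simp] lemma lift1_last (y : Fin q → ℝ) : lift1 y (Fin.last q) = 1 := by simp [lift1]

@[simp] lemma lift0_castSucc (y : Fin q → ℝ) (i : Fin q) : lift0 y i.castSucc = y i := by
  simp [lift0]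

@[simp] lemma lift0_last (y : Fin q → ℝ) : lift0 y (Fin.last q) = 0 := by simp [lift0]

@[simp] lemma projq_apply (p : Fin (q + 1) → ℝ) (i : Fin q) : projq p i = p i.castSucc := rfl

@[simp] lemma projq_lift1 (y : Fin q → ℝ) : projq (lift1 y) = y := funext (lift1_castSucc y)

@[fun_prop]
lemma continuous_projq : Continuous (projq : (Fin (q + 1) → ℝ) → Fin q → ℝ) :=
  continuous_pi fun i => continuous_apply i.castSucc

lemma projq_image_inter_lift1_image (E : Set (Fin (q + 1) → ℝ)) (B : Set (Fin q → ℝ)) :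
    projq '' (E ∩ lift1 '' B) = B ∩ lift1 ⁻¹' E := by
  ext y
  constructor
  · rintro ⟨_, ⟨hE, z, hz, rfl⟩, rfl⟩
    simpa [hz] using hE
  · exact fun ⟨hy, hE⟩ => ⟨lift1 y, ⟨hE, y, hy, rfl⟩, projq_lift1 y⟩

lemma ext_castSucc_last {p r : Fin (q + 1) → ℝ} (h : ∀ i : Fin q, p i.castSucc = r i.castSucc)
    (hl : p (Fin.last q) = r (Fin.last q)) : p = r :=
  funext (Fin.lastCases hl h)

lemma lift1_ne_lift0 (y d : Fin q → ℝ) : lift1 y ≠ lift0 d :=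
  fun h => one_ne_zero (α := ℝ) (by simpa using congrFun h (Fin.last q))

def lift0Linear (q : ℕ) : (Fin q → ℝ) →ₗ[ℝ] Fin (q + 1) → ℝ where
  toFun := lift0
  map_add' a b := ext_castSucc_last (by simp) (by simp)
  map_smul' c a := ext_castSucc_last (by simp) (by simp)

def lift1Affine (q : ℕ) : (Fin q → ℝ) →ᵃ[ℝ] Fin (q + 1) → ℝ where
  toFun := lift1
  linear := lift0Linear q
  map_vadd' y d := ext_castSucc_last (by simp [lift0Linear]) (by simp [lift0Linear])

@[simp] lemma coe_lift1Affine : ⇑(lift1Affine q) = lift1 := rfl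

lemma injective_lift0Linear : Function.Injective (lift0Linear q) := fun a b h =>
  funext fun i => by simpa [lift0Linear] using congrFun h i.castSucc

lemma lift1_inv_smul_projq {p : Fin (q + 1) → ℝ} (hp : p (Fin.last q) ≠ 0) :
    lift1 ((p (Fin.last q))⁻¹ • projq p) = (p (Fin.last q))⁻¹ • p :=
  ext_castSucc_last (fun i => by simp) (by simp [hp])

lemma lift0_projq {p : Fin (q + 1) → ℝ} (hp : p (Fin.last q) = 0) : lift0 (projq p) = p :=
  ext_castSucc_last (by simp) (by simp [hp])

-- For `p = t • lift1 y` this is `t • y + (1 - t) • x`, and for `p = lift0 d` it is `x + d`.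
def dehom (x : Fin q → ℝ) (p : Fin (q + 1) → ℝ) : Fin q → ℝ :=
  projq p + (1 - p (Fin.last q)) • x

lemma dehom_combo (x : Fin q → ℝ) (p r : Fin (q + 1) → ℝ) (l : ℝ) :
    dehom x (l • p + (1 - l) • r) = l • dehom x p + (1 - l) • dehom x r := by
  ext i
  simp only [dehom, Pi.add_apply, Pi.smul_apply, projq_apply, smul_eq_mul]
  ring

lemma lift1_dehom (x : Fin q → ℝ) (p : Fin (q + 1) → ℝ) :
    lift1 (dehom x p) = p + (1 - p (Fin.last q)) • lift1 x :=
  ext_castSucc_last (fun i => by simp [dehom]) (by simp [dehom])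

end Lifts

section PhiMap

variable {q : ℕ} {C : Set (Fin q → ℝ)}

lemma phiMap_mono {C D : Set (Fin q → ℝ)} (h : C ⊆ D) : PhiMap C ⊆ PhiMap D := by
  refine closure_mono ?_
  rintro _ ⟨l, hl, x, hx, rfl⟩
  exact ⟨l, hl, x, convexHull_mono (image_mono h) hx, rfl⟩

lemma convex_phiMap (C : Set (Fin q → ℝ)) : Convex ℝ (PhiMap C) :=
  (convex_coneOf _).closure

lemma smul_mem_phiMap {p : Fin (q + 1) → ℝ} (hp : p ∈ PhiMap C) {c : ℝ} (hc : 0 ≤ c) :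
    c • p ∈ PhiMap C := by
  refine closure_mono ?_ (smul_closure_subset c _ (smul_mem_smul_set hp))
  rintro _ ⟨r, hr, rfl⟩
  exact smul_mem_coneOf hr hc

lemma smul_mem_phiMap_iff {p : Fin (q + 1) → ℝ} {c : ℝ} (hc : 0 < c) :
    c • p ∈ PhiMap C ↔ p ∈ PhiMap C := by
  refine ⟨fun h => ?_, fun h => smul_mem_phiMap h hc.le⟩
  simpa [smul_smul, inv_mul_cancel₀ hc.ne'] using smul_mem_phiMap h (inv_nonneg.2 hc.le)

lemma smul_lift1_mem_coneOf {t : ℝ} (ht : 0 ≤ t) {y : Fin q → ℝ} (hy : y ∈ C) :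
    t • lift1 y ∈ coneOf (lift1 '' C) :=
  ⟨t, ht, lift1 y, subset_convexHull ℝ _ (mem_image_of_mem lift1 hy), rfl⟩

lemma smul_lift1_mem_phiMap {t : ℝ} (ht : 0 ≤ t) {y : Fin q → ℝ} (hy : y ∈ C) :
    t • lift1 y ∈ PhiMap C :=
  subset_closure (smul_lift1_mem_coneOf ht hy)

lemma lift1_mem_phiMap {y : Fin q → ℝ} (hy : y ∈ C) : lift1 y ∈ PhiMap C := by
  simpa using smul_lift1_mem_phiMap zero_le_one hy

lemma lift0_mem_phiMap {x d : Fin q → ℝ} (hx : x ∈ C) (hd : d ∈ recCone C) :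
    lift0 d ∈ PhiMap C := by
  have hlim : Tendsto (fun ε : ℝ => lift0 d + ε • lift1 x) (𝓝[>] 0) (𝓝 (lift0 d)) := by
    simpa using (tendsto_nhdsWithin_of_tendsto_nhds
      ((continuous_id.smul continuous_const).tendsto (0 : ℝ))).const_add (lift0 d)
  refine mem_closure_of_tendsto hlim (eventually_nhdsWithin_of_forall fun ε hε => ?_)
  have hε : (0 : ℝ) < ε := hε
  convert smul_lift1_mem_coneOf hε.le (hd x hx ε⁻¹ (inv_nonneg.2 hε.le)) using 1
  exact ext_castSucc_last (fun i => by simp; field_simp; ring) (by simp)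

lemma phiMap_subset_span (C : Set (Fin q → ℝ)) :
    PhiMap C ⊆ Submodule.span ℝ (lift1 '' C) :=
  closure_minimal (coneOf_subset_span _) (Submodule.closed_of_finiteDimensional _)

lemma mem_coneOf_lift1_image (hC : Convex ℝ C) {p : Fin (q + 1) → ℝ}
    (hp : p ∈ coneOf (lift1 '' C)) : ∃ l : ℝ, 0 ≤ l ∧ ∃ y ∈ C, p = l • lift1 y := by
  obtain ⟨l, hl, _, ⟨y, hy, rfl⟩, rfl⟩ :=
    (mem_coneOf_iff (hC.affine_image (lift1Affine q))).1 hp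
  exact ⟨l, hl, y, hy, rfl⟩

lemma last_nonneg_of_mem_phiMap (hC : Convex ℝ C) {p : Fin (q + 1) → ℝ} (hp : p ∈ PhiMap C) :
    0 ≤ p (Fin.last q) := by
  refine isClosed_Ici.mem_of_mem_closure_of_mapsTo hp isOpen_univ trivial
    (continuous_apply _).continuousAt fun r ⟨_, hr⟩ => ?_
  obtain ⟨l, hl, y, -, rfl⟩ := mem_coneOf_lift1_image hC hr
  simpa using hl

lemma inv_smul_projq_mem_of_mem_phiMap (hCc : IsClosed C) (hC : Convex ℝ C)
    {p : Fin (q + 1) → ℝ} (hp : p ∈ PhiMap C) (ht : 0 < p (Fin.last q)) :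
    (p (Fin.last q))⁻¹ • projq p ∈ C := by
  have hlast : Continuous fun r : Fin (q + 1) → ℝ => r (Fin.last q) := continuous_apply _
  refine hCc.mem_of_mem_closure_of_mapsTo (g := fun r => (r (Fin.last q))⁻¹ • projq r) hp
    (isOpen_lt continuous_const hlast) ht
    ((hlast.continuousAt.inv₀ ht.ne').smul continuous_projq.continuousAt) ?_
  rintro r ⟨hr0, hr⟩
  obtain ⟨l, -, y, hy, rfl⟩ := mem_coneOf_lift1_image hC hr
  have hl : l ≠ 0 := by simpa using (show (0 : ℝ) < _ from hr0).ne'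
  convert hy
  ext i
  simp [hl]

lemma projq_mem_recCone_of_mem_phiMap (hCc : IsClosed C) (hC : Convex ℝ C)
    {p : Fin (q + 1) → ℝ} (hp : p ∈ PhiMap C) (ht : p (Fin.last q) = 0) :
    projq p ∈ recCone C := by
  intro x hx s hs
  have hU : IsOpen {r : Fin (q + 1) → ℝ | s * r (Fin.last q) < 1} :=
    isOpen_lt (continuous_const.mul (continuous_apply _)) continuous_const
  convert hCc.mem_of_mem_closure_of_mapsTo hp hU (by simp [ht])
    (g := fun r => (1 - s * r (Fin.last q)) • x + s • projq r) (by fun_prop) ?_ using 1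
  · simp [ht]
  rintro r ⟨hr1, hr⟩
  obtain ⟨l, hl, y, hy, rfl⟩ := mem_coneOf_lift1_image hC hr
  replace hr1 : s * l < 1 := by simpa using hr1
  convert hC hx hy (sub_nonneg.2 hr1.le) (mul_nonneg hs hl) (sub_add_cancel 1 _) using 1
  ext i
  simp [mul_assoc]

lemma mem_phiMap_cases (hCc : IsClosed C) (hC : Convex ℝ C) {p : Fin (q + 1) → ℝ}
    (hp : p ∈ PhiMap C) :
    (0 < p (Fin.last q) ∧ (p (Fin.last q))⁻¹ • projq p ∈ C) ∨
      (p (Fin.last q) = 0 ∧ projq p ∈ recCone C) := by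
  rcases (last_nonneg_of_mem_phiMap hC hp).lt_or_eq with ht | ht
  · exact Or.inl ⟨ht, inv_smul_projq_mem_of_mem_phiMap hCc hC hp ht⟩
  · exact Or.inr ⟨ht.symm, projq_mem_recCone_of_mem_phiMap hCc hC hp ht.symm⟩

lemma lift1_mem_phiMap_iff (hCc : IsClosed C) (hC : Convex ℝ C) {y : Fin q → ℝ} :
    lift1 y ∈ PhiMap C ↔ y ∈ C := by
  refine ⟨fun h => ?_, lift1_mem_phiMap⟩
  rcases mem_phiMap_cases hCc hC h with ⟨-, h⟩ | ⟨h, -⟩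
  · simpa using h
  · simp at h

end PhiMap

section FaceCorrespondence

variable {q : ℕ} {B F : Set (Fin q → ℝ)}

lemma dehom_mem_of_mem_phiMap (hBc : IsClosed B) (hB : Convex ℝ B) {x : Fin q → ℝ}
    (hx : x ∈ B) {p : Fin (q + 1) → ℝ} (hp : p ∈ PhiMap B) (ht : p (Fin.last q) ≤ 1) :
    dehom x p ∈ B := by
  rcases mem_phiMap_cases hBc hB hp with ⟨ht0, hy⟩ | ⟨ht0, hd⟩
  · convert hB hy hx ht0.le (sub_nonneg.2 ht) (add_sub_cancel _ 1) using 1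
    rw [dehom, smul_inv_smul₀ ht0.ne']
  · simpa [dehom, ht0, add_comm] using hd x hx 1 zero_le_one

lemma mem_phiMap_of_dehom_mem (hBc : IsClosed B) (hB : Convex ℝ B) (hF : IsFaceOf F B)
    {x : Fin q → ℝ} (hx : x ∈ F) {p : Fin (q + 1) → ℝ} (hp : p ∈ PhiMap B)
    (ht : p (Fin.last q) < 1) (h : dehom x p ∈ F) : p ∈ PhiMap F := by
  rcases mem_phiMap_cases hBc hB hp with ⟨ht0, hy⟩ | ⟨ht0, hd⟩
  · have hyF := hF.left_mem hy (hF.subset hx) ht0 ht (by rwa [smul_inv_smul₀ ht0.ne'])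
    rw [← smul_mem_phiMap_iff (inv_pos.2 ht0), ← lift1_inv_smul_projq ht0.ne']
    exact lift1_mem_phiMap hyF
  · rw [← lift0_projq ht0]
    refine lift0_mem_phiMap hx (hF.mem_recCone_of_add_mem hx hd ?_)
    simpa [dehom, ht0, add_comm] using h

lemma mem_phiMap_iff_dehom_smul_mem (hBc : IsClosed B) (hB : Convex ℝ B) (hF : IsFaceOf F B)
    {x : Fin q → ℝ} (hx : x ∈ F) {p : Fin (q + 1) → ℝ} (hp : p ∈ PhiMap B) {c : ℝ}
    (hc : 0 < c) (hlt : c * p (Fin.last q) < 1) : p ∈ PhiMap F ↔ dehom x (c • p) ∈ F := by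
  have hlt' : (c • p) (Fin.last q) < 1 := by simpa using hlt
  rw [← smul_mem_phiMap_iff hc]
  exact ⟨fun h => dehom_mem_of_mem_phiMap (hF.isClosed hBc) hF.1 hx h hlt'.le,
    mem_phiMap_of_dehom_mem hBc hB hF hx (smul_mem_phiMap hp hc.le) hlt'⟩

lemma phiMap_isFaceOf (hBc : IsClosed B) (hB : Convex ℝ B) (hF : IsFaceOf F B)
    (hFne : F.Nonempty) : IsFaceOf (PhiMap F) (PhiMap B) := by
  obtain ⟨x, hx⟩ := hFne
  refine ⟨convex_phiMap F, phiMap_mono hF.subset, fun p₁ hp₁ p₂ hp₂ l hl0 hl1 hp => ?_⟩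
  have ht₁ := last_nonneg_of_mem_phiMap hB hp₁
  have ht₂ := last_nonneg_of_mem_phiMap hB hp₂
  -- Shrink everything so that the last coordinates drop below `1`, then dehomogenize at `x`.
  set c := (1 + p₁ (Fin.last q) + p₂ (Fin.last q))⁻¹
  have hc : 0 < c := by positivity
  have hsmall : ∀ t, t ≤ p₁ (Fin.last q) + p₂ (Fin.last q) → c * t < 1 := fun t ht => by
    rw [inv_mul_lt_one₀ (by positivity)]
    linarith
  have hdehom : ∀ p ∈ PhiMap B, p (Fin.last q) ≤ p₁ (Fin.last q) + p₂ (Fin.last q) →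
      dehom x (c • p) ∈ B := fun p hp ht =>
    dehom_mem_of_mem_phiMap hBc hB (hF.subset hx) (smul_mem_phiMap hp hc.le)
      (by simpa using (hsmall _ ht).le)
  have hcomb : (l • p₁ + (1 - l) • p₂) (Fin.last q) ≤ p₁ (Fin.last q) + p₂ (Fin.last q) := by
    simp only [Pi.add_apply, Pi.smul_apply, smul_eq_mul]
    nlinarith
  rw [mem_phiMap_iff_dehom_smul_mem hBc hB hF hx ((convex_phiMap B) hp₁ hp₂ hl0.le
      (sub_nonneg.2 hl1.le) (add_sub_cancel l 1)) hc (hsmall _ hcomb),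
    show c • (l • p₁ + (1 - l) • p₂) = l • (c • p₁) + (1 - l) • (c • p₂) by module,
    dehom_combo] at hp
  rw [mem_phiMap_iff_dehom_smul_mem hBc hB hF hx hp₁ hc (hsmall _ (by linarith)),
    mem_phiMap_iff_dehom_smul_mem hBc hB hF hx hp₂ hc (hsmall _ (by linarith))]
  exact hF.2.2 _ (hdehom p₁ hp₁ (by linarith)) _ (hdehom p₂ hp₂ (by linarith)) l hl0 hl1 hp

lemma projq_image_phiMap_inter (hBc : IsClosed B) (hF : IsFaceOf F B) :
    projq '' (PhiMap F ∩ lift1 '' B) = F := by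
  rw [projq_image_inter_lift1_image]
  ext y
  simp only [mem_inter_iff, mem_preimage, lift1_mem_phiMap_iff (hF.isClosed hBc) hF.1]
  exact ⟨And.right, fun hy => ⟨hF.subset hy, hy⟩⟩

variable {E : Set (Fin (q + 1) → ℝ)}

lemma isFaceOf_inter_preimage_lift1 (hB : Convex ℝ B) (hE : IsFaceOf E (PhiMap B)) :
    IsFaceOf (B ∩ lift1 ⁻¹' E) B :=
  hE.inter_preimage hB (lift1Affine q) fun _ hy => lift1_mem_phiMap hy

lemma inter_preimage_lift1_nonempty (hBc : IsClosed B) (hB : Convex ℝ B)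
    (hE : IsFaceOf E (PhiMap B)) (hEn : ¬ E ⊆ lift0 '' recCone B) :
    (B ∩ lift1 ⁻¹' E).Nonempty := by
  have hK : ∀ p ∈ PhiMap B, ∀ c : ℝ, 0 ≤ c → c • p ∈ PhiMap B := fun _ hp _ => smul_mem_phiMap hp
  obtain ⟨p, hpE, hp⟩ := not_subset.1 hEn
  rcases mem_phiMap_cases hBc hB (hE.subset hpE) with ⟨ht, hy⟩ | ⟨ht, hd⟩
  · refine ⟨_, hy, ?_⟩
    rw [mem_preimage, lift1_inv_smul_projq ht.ne']
    exact hE.smul_mem hK hpE (inv_nonneg.2 ht.le)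
  · exact absurd ⟨projq p, hd, lift0_projq ht⟩ hp

lemma phiMap_inter_preimage_lift1 (hBc : IsClosed B) (hB : Convex ℝ B)
    (hE : IsFaceOf E (PhiMap B)) (hne : (B ∩ lift1 ⁻¹' E).Nonempty) :
    PhiMap (B ∩ lift1 ⁻¹' E) = E := by
  have hF := isFaceOf_inter_preimage_lift1 hB hE
  have hK : ∀ p ∈ PhiMap B, ∀ c : ℝ, 0 ≤ c → c • p ∈ PhiMap B := fun _ hp _ => smul_mem_phiMap hp
  obtain ⟨x, hx⟩ := hne
  refine (closure_minimal ?_ (hE.isClosed isClosed_closure)).antisymm fun p hp => ?_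
  · intro p hp
    obtain ⟨l, hl, y, hy, rfl⟩ := mem_coneOf_lift1_image hF.1 hp
    exact hE.smul_mem hK hy.2 hl
  have hpB := hE.subset hp
  have ht := last_nonneg_of_mem_phiMap hB hpB
  have hc : 0 < (1 + p (Fin.last q))⁻¹ := by positivity
  have hlt : (1 + p (Fin.last q))⁻¹ * p (Fin.last q) < 1 := by
    rw [inv_mul_lt_one₀ (by positivity)]
    linarith
  refine (mem_phiMap_iff_dehom_smul_mem hBc hB hF hx hpB hc hlt).2
    ⟨dehom_mem_of_mem_phiMap hBc hB hx.1 (smul_mem_phiMap hpB hc.le) (by simpa using hlt.le), ?_⟩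
  rw [mem_preimage, lift1_dehom]
  exact hE.add_mem hK (hE.smul_mem hK hp hc.le)
    (hE.smul_mem hK hx.2 (sub_nonneg.2 (by simpa using hlt.le)))

end FaceCorrespondence

lemma finrank_vectorSpan_insert_of_notMem {V : Type*} [AddCommGroup V] [Module ℝ V]
    [FiniteDimensional ℝ V] {s : Set V} {x p : V} (hx : x ∈ s) (hp : p ∉ affineSpan ℝ s) :
    Module.finrank ℝ (vectorSpan ℝ (insert p s)) = Module.finrank ℝ (vectorSpan ℝ s) + 1 := by
  have hxA := mem_affineSpan ℝ hx
  rw [← direction_affineSpan, ← affineSpan_insert_affineSpan,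
    AffineSubspace.direction_affineSpan_insert hxA, direction_affineSpan, sup_comm,
    Submodule.finrank_sup_span_singleton]
  rwa [← direction_affineSpan, AffineSubspace.vsub_right_mem_direction_iff_mem hxA]

lemma sdim_phiMap {q : ℕ} {C : Set (Fin q → ℝ)} (hC : C.Nonempty) :
    sdim (PhiMap C) = sdim C + 1 := by
  obtain ⟨x, hx⟩ := hC
  have h0 : (0 : Fin (q + 1) → ℝ) ∈ PhiMap C := by
    simpa using smul_lift1_mem_phiMap le_rfl hx
  have hspan : vectorSpan ℝ (PhiMap C) = vectorSpan ℝ (insert 0 (lift1 '' C)) := by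
    refine le_antisymm ?_ (vectorSpan_mono ℝ (insert_subset h0 (image_subset_iff.2
      fun y hy => lift1_mem_phiMap hy)))
    rw [← direction_affineSpan ℝ (insert 0 _)]
    refine vectorSpan_mono ℝ ?_
    rw [affineSpan_insert_zero]
    exact phiMap_subset_span C
  have h0A : (0 : Fin (q + 1) → ℝ) ∉ affineSpan ℝ (lift1 '' C) := by
    rw [← coe_lift1Affine, ← AffineSubspace.map_span]
    rintro ⟨y, -, hy⟩
    simpa using congrFun hy (Fin.last q)
  rw [sdim, sdim, hspan, finrank_vectorSpan_insert_of_notMem (mem_image_of_mem _ hx) h0A,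
    ← coe_lift1Affine, ← AffineMap.map_vectorSpan]
  exact congrArg (· + 1)
    (Submodule.equivMapOfInjective (lift1Affine q).linear injective_lift0Linear _).finrank_eq.symm

/-- `Φ` is an inclusion-invariant bijection between the nonempty faces of a
polyhedron `B` and the faces `E` of `Φ(B)` with `E ⊄ 0⁺B × {0}`, with inverse
`E ↦ p[E ∩ (B × {1})]`, and `dim Φ(F) = dim F + 1`. -/
theorem stmt4 (q : ℕ) (B : Set (Fin q → ℝ)) (hB : IsPolyhedron B) :
    (∀ F, IsFaceOf F B → F.Nonempty →
      IsFaceOf (PhiMap F) (PhiMap B) ∧ ¬ PhiMap F ⊆ lift0 '' recCone B) ∧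
    (∀ E, IsFaceOf E (PhiMap B) → ¬ E ⊆ lift0 '' recCone B →
      IsFaceOf (projq '' (E ∩ lift1 '' B)) B ∧ (projq '' (E ∩ lift1 '' B)).Nonempty ∧
        PhiMap (projq '' (E ∩ lift1 '' B)) = E) ∧
    (∀ F, IsFaceOf F B → F.Nonempty → projq '' (PhiMap F ∩ lift1 '' B) = F) ∧
    (∀ F1 F2, IsFaceOf F1 B → F1.Nonempty → IsFaceOf F2 B → F2.Nonempty →
      (F1 ⊆ F2 ↔ PhiMap F1 ⊆ PhiMap F2)) ∧
    (∀ F, IsFaceOf F B → F.Nonempty → sdim (PhiMap F) = sdim F + 1) := by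
  have hBc := hB.isClosed
  have hBconv := hB.convex
  refine ⟨fun F hF hFne => ⟨phiMap_isFaceOf hBc hBconv hF hFne, ?_⟩,
    fun E hE hEn => ?_, fun F hF _ => projq_image_phiMap_inter hBc hF,
    fun F₁ F₂ hF₁ _ hF₂ _ => ⟨phiMap_mono, fun h => ?_⟩, fun F _ hFne => sdim_phiMap hFne⟩
  · obtain ⟨x, hx⟩ := hFne
    intro h
    obtain ⟨d, -, hd⟩ := h (lift1_mem_phiMap hx)
    exact lift1_ne_lift0 x d hd.symm
  · rw [projq_image_inter_lift1_image]
    have hne := inter_preimage_lift1_nonempty hBc hBconv hE hEn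
    exact ⟨isFaceOf_inter_preimage_lift1 hBconv hE, hne,
      phiMap_inter_preimage_lift1 hBc hBconv hE hne⟩
  · rw [← projq_image_phiMap_inter hBc hF₁, ← projq_image_phiMap_inter hBc hF₂]
    exact image_mono (inter_subset_inter_left _ h)
end
end

section
/- Let B ⊆ ℝ^q be a polyhedron and let F be a nonempty face of B. Then the recession cone 0⁺F is a face of the recession cone 0⁺B. -/
open Matrix Set Pointwise

noncomputable section

/-- If `F` is a nonempty face of the polyhedron `B`, then `0⁺F` is a face
of `0⁺B`. -/
theorem stmt5 (q : ℕ) (B : Set (Fin q → ℝ)) (hB : IsPolyhedron B)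
    (F : Set (Fin q → ℝ)) (hF : IsFaceOf F B) (hFne : F.Nonempty) :
    IsFaceOf (recCone F) (recCone B) := by
  obtain ⟨k, W, v, rfl⟩ := hB
  obtain ⟨hFconv, hFsub, hFface⟩ := hF
  obtain ⟨x₀, hx₀⟩ := hFne
  refine ⟨?_, ?_, ?_⟩
  · -- convexity of recCone F
    intro d₁ h₁ d₂ h₂ a b ha hb hab
    intro x hx t ht
    have e : x + t • (a • d₁ + b • d₂) = a • (x + t • d₁) + b • (x + t • d₂) := by
      have h1 : b = 1 - a := by linarith
      subst h1
      module
    rw [e]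
    exact hFconv (h₁ x hx t ht) (h₂ x hx t ht) ha hb hab
  · -- recCone F ⊆ recCone B
    intro d hd
    -- first: 0 ≤ W.mulVec d
    have key : ∀ i, 0 ≤ W.mulVec d i := by
      intro i
      by_contra hneg
      push_neg at hneg
      have hx₀B := hFsub hx₀
      have hvx : v i ≤ W.mulVec x₀ i := hx₀B i
      set c := W.mulVec d i
      set s := (W.mulVec x₀ i - v i + 1) / (-c) with hs
      have hspos : 0 ≤ s := by
        apply div_nonneg
        · linarith
        · linarith
      have hmem : x₀ + s • d ∈ F := hd x₀ hx₀ s hspos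
      have hB2 : v i ≤ W.mulVec (x₀ + s • d) i := hFsub hmem i
      rw [Matrix.mulVec_add, Matrix.mulVec_smul] at hB2
      have : W.mulVec x₀ i + s * c < v i := by
        have hc : c < 0 := hneg
        have hcne : (-c) ≠ 0 := ne_of_gt (by linarith)
        have : s * (-c) = W.mulVec x₀ i - v i + 1 := div_mul_cancel₀ _ hcne
        nlinarith
      simp only [Pi.add_apply, Pi.smul_apply, smul_eq_mul] at hB2
      linarith
    intro x hx t ht
    intro i
    have := hx i
    have h1 : 0 ≤ t * W.mulVec d i := mul_nonneg ht (key i)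
    rw [Matrix.mulVec_add, Matrix.mulVec_smul]
    simp only [Pi.add_apply, Pi.smul_apply, smul_eq_mul]
    linarith
  · -- face property
    intro y hy z hz l hl0 hl1 hmem
    constructor
    · intro x hx t ht
      rcases eq_or_lt_of_le ht with rfl | htpos
      · simpa using hx
      · have e : x + t • (l • y + (1 - l) • z)
            = l • (x + t • y) + (1 - l) • (x + t • z) := by
          module
        have hFm : l • (x + t • y) + (1 - l) • (x + t • z) ∈ F := by
          rw [← e]; exact hmem x hx t ht
        exact (hFface _ (hy x (hFsub hx) t ht) _ (hz x (hFsub hx) t ht) l hl0 hl1 hFm).1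
    · intro x hx t ht
      rcases eq_or_lt_of_le ht with rfl | htpos
      · simpa using hx
      · have e : x + t • (l • y + (1 - l) • z)
            = l • (x + t • y) + (1 - l) • (x + t • z) := by
          module
        have hFm : l • (x + t • y) + (1 - l) • (x + t • z) ∈ F := by
          rw [← e]; exact hmem x hx t ht
        exact (hFface _ (hy x (hFsub hx) t ht) _ (hz x (hFsub hx) t ht) l hl0 hl1 hFm).2
end
end

section
/- If C∖{0} ∩ L(𝒫) ≠ ∅, where L(𝒫) is the lineality space of the upper image 𝒫 of (VLP), then no minimizer for (VLP) exists: there is no point x̄ ∈ S with Px̄ ∉ P[S] + C∖{0}, and no direction x̄ ∈ (0⁺S)∖{0} with Px̄ ∉ P[0⁺S] + C∖{0}. -/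
open Matrix Set Pointwise

noncomputable section

/-!
Let `c ∈ C \ {0}` lie in the lineality space of `𝒫`, so that `-c` is a recession direction of `𝒫`.
For `x ∈ S` this gives `Px - c = Py + e` with `y ∈ S`, `e ∈ C`, hence `Px = Py + (e + c)`, and
`e + c ≠ 0` because `C` is pointed. For directions the same argument needs `-c ∈ P[0⁺S] + C`,
i.e. the inclusion `0⁺𝒫 ⊆ P[0⁺S] + C`. This is a Farkas-type statement: the Farkas lemma
follows from the separation theorem for closed convex cones, and finitely generated cones are
closed by the conic Carathéodory theorem.
-/

section ConicCaratheodory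

variable {ρ E : Type*} [AddCommGroup E] [Module ℝ E] {w : ρ → E}

lemma exists_sum_erase_smul_eq_of_not_linearIndepOn [DecidableEq ρ] {s : Finset ρ} {t : ρ → ℝ}
    (ht : ∀ i ∈ s, 0 ≤ t i) (hs : ¬ LinearIndepOn ℝ w s) :
    ∃ i ∈ s, ∃ t' : ρ → ℝ, (∀ j ∈ s.erase i, 0 ≤ t' j) ∧
      ∑ j ∈ s.erase i, t' j • w j = ∑ j ∈ s, t j • w j := by
  obtain ⟨g, hg, hpos⟩ : ∃ g : ρ → ℝ, ∑ i ∈ s, g i • w i = 0 ∧ ∃ i ∈ s, 0 < g i := by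
    obtain ⟨g, hg, i, hi, hgi⟩ := not_linearIndepOn_finset_iff.mp hs
    rcases hgi.lt_or_gt with hneg | hpos
    · exact ⟨-g, by simp [neg_smul, Finset.sum_neg_distrib, hg], i, hi, by simpa using hneg⟩
    · exact ⟨g, hg, i, hi, hpos⟩
  -- Move from `t` along `-g` until the first coefficient vanishes.
  obtain ⟨i, hi, hmin⟩ := Finset.exists_min_image (s.filter (0 < g ·)) (fun j => t j / g j)
    (by obtain ⟨i, hi, hgi⟩ := hpos; exact ⟨i, Finset.mem_filter.mpr ⟨hi, hgi⟩⟩)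
  rw [Finset.mem_filter] at hi
  have hτ : 0 ≤ t i / g i := div_nonneg (ht i hi.1) hi.2.le
  refine ⟨i, hi.1, fun j => t j - t i / g i * g j, fun j hj => ?_, ?_⟩
  · have hjs := Finset.mem_of_mem_erase hj
    rcases le_or_gt (g j) 0 with hgj | hgj
    · nlinarith [ht j hjs]
    · have := hmin j (Finset.mem_filter.mpr ⟨hjs, hgj⟩)
      rw [le_div_iff₀ hgj] at this
      linarith
  · have hzero : (t i - t i / g i * g i) • w i = 0 := by
      rw [div_mul_cancel₀ _ hi.2.ne', sub_self, zero_smul]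
    rw [Finset.sum_erase s (f := fun j => (t j - t i / g i * g j) • w j) hzero]
    simp only [sub_smul, mul_smul, Finset.sum_sub_distrib, ← Finset.smul_sum, hg, smul_zero,
      sub_zero]

theorem exists_linearIndepOn_sum_smul_eq (s : Finset ρ) (t : ρ → ℝ) (ht : ∀ i ∈ s, 0 ≤ t i) :
    ∃ s' : Finset ρ, LinearIndepOn ℝ w s' ∧ ∃ t' : ρ → ℝ, (∀ i ∈ s', 0 ≤ t' i) ∧
      ∑ i ∈ s', t' i • w i = ∑ i ∈ s, t i • w i := by
  classical
  induction s using Finset.strongInduction generalizing t with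
  | H s ih =>
    by_cases hs : LinearIndepOn ℝ w s
    · exact ⟨s, hs, t, ht, rfl⟩
    obtain ⟨i, hi, t', ht', heq⟩ := exists_sum_erase_smul_eq_of_not_linearIndepOn ht hs
    obtain ⟨s', hli, t'', ht'', heq'⟩ := ih _ (Finset.erase_ssubset hi) t' ht'
    exact ⟨s', hli, t'', ht'', heq'.trans heq⟩

theorem PointedCone.isClosed_hull_range [Fintype ρ] [TopologicalSpace E]
    [IsTopologicalAddGroup E] [ContinuousSMul ℝ E] [T2Space E] (w : ρ → E) :
    IsClosed (PointedCone.hull ℝ (range w) : Set E) := by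
  classical
  have hcover : (PointedCone.hull ℝ (range w) : Set E) =
      ⋃ (s : Finset ρ) (_ : LinearIndepOn ℝ w s),
        Fintype.linearCombination ℝ (fun i : s => w i) '' {u | 0 ≤ u} := by
    ext x
    simp only [SetLike.mem_coe, mem_iUnion, mem_image, Fintype.linearCombination_apply]
    constructor
    · intro hx
      obtain ⟨c, rfl⟩ := (Submodule.mem_span_range_iff_exists_fun _).mp hx
      obtain ⟨s, hli, t, ht, heq⟩ :=
        exists_linearIndepOn_sum_smul_eq (w := w) Finset.univ (fun i => c i) fun i _ => (c i).2
      exact ⟨s, hli, fun i => t i, fun i => ht i i.2, (Finset.sum_coe_sort s _).trans heq⟩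
    · rintro ⟨s, -, u, hu, rfl⟩
      exact Submodule.sum_mem _ fun i _ =>
        PointedCone.smul_mem _ (hu i) (PointedCone.subset_hull ⟨i, rfl⟩)
  rw [hcover]
  refine isClosed_iUnion_of_finite fun s => isClosed_iUnion_of_finite fun hli => ?_
  exact (LinearMap.isClosedEmbedding_of_injective
    (LinearMap.ker_eq_bot.mpr hli.fintypeLinearCombination_injective)).isClosedMap _
    (isClosed_le continuous_const continuous_id)

end ConicCaratheodory

theorem Matrix.exists_le_mulVec_of_forall_vecMul_eq_zero {ι η : Type*} [Fintype ι] [Fintype η]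
    (M : Matrix ι η ℝ) (g : ι → ℝ) (h : ∀ y : ι → ℝ, 0 ≤ y → y ᵥ* M = 0 → y ⬝ᵥ g ≤ 0) :
    ∃ d : η → ℝ, g ≤ M *ᵥ d := by
  classical
  let e : ι → ι → ℝ := fun i j => if i = j then 1 else 0
  -- The cone generated by `±Mᵀ j` and `-e i` is `{M *ᵥ d - s | 0 ≤ s}`.
  let w : (η ⊕ η) ⊕ ι → ι → ℝ :=
    Sum.elim (Sum.elim (fun j => Mᵀ j) (fun j => -Mᵀ j)) (fun i => -e i)
  let K : ProperCone ℝ (ι → ℝ) :=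
    ⟨PointedCone.hull ℝ (range w), PointedCone.isClosed_hull_range w⟩
  have hw : ∀ r, w r ∈ K := fun r => PointedCone.subset_hull ⟨r, rfl⟩
  by_cases hg : g ∈ K
  · refine Submodule.span_induction (p := fun x _ => ∃ d : η → ℝ, x ≤ M *ᵥ d) ?_ ?_ ?_ ?_ hg
    · rintro _ ⟨((j | j) | i), rfl⟩
      · exact ⟨Pi.single j 1, fun i => by simp [w, mulVec_single]⟩
      · exact ⟨-Pi.single j 1, fun i => by simp [w, mulVec_neg, mulVec_single]⟩
      · exact ⟨0, fun k => by by_cases i = k <;> simp [w, e, *]⟩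
    · exact ⟨0, by simp⟩
    · rintro x y - - ⟨d, hd⟩ ⟨d', hd'⟩
      exact ⟨d + d', by rw [mulVec_add]; exact add_le_add hd hd'⟩
    · rintro a x - ⟨d, hd⟩
      exact ⟨(a : ℝ) • d, by rw [mulVec_smul]; exact smul_le_smul_of_nonneg_left hd a.2⟩
  obtain ⟨f, hfK, hfg⟩ := K.hyperplane_separation_point hg
  set y : ι → ℝ := fun i => -f (e i)
  have hf (x : ι → ℝ) : f x = -(y ⬝ᵥ x) := by
    have hsum := LinearMap.pi_apply_eq_sum_univ f.toLinearMap x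
    simp only [ContinuousLinearMap.coe_coe, smul_eq_mul] at hsum
    simp [hsum, y, e, dotProduct, mul_comm]
  have hy : 0 ≤ y := fun i => by simpa [w, y] using hfK _ (hw (Sum.inr i))
  have hyM : y ᵥ* M = 0 := funext fun j => show y ⬝ᵥ Mᵀ j = 0 by
    have h1 := hfK _ (hw (Sum.inl (Sum.inl j)))
    have h2 := hfK _ (hw (Sum.inl (Sum.inr j)))
    simp only [hf, w, Sum.elim_inl, Sum.elim_inr, dotProduct_neg, neg_neg, neg_nonneg] at h1 h2
    exact le_antisymm h1 h2
  linarith [h y hy hyM, hf g]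

section Cones

variable {E : Type*} [AddCommGroup E] [Module ℝ E] {C : Set E} {x y : E}

lemma smul_mem_of_eq_coneOf (hC : C = coneOf C) {t : ℝ} (ht : 0 ≤ t) (hx : x ∈ C) :
    t • x ∈ C := by
  rw [hC]
  exact ⟨t, ht, x, subset_convexHull ℝ C hx, rfl⟩

lemma add_mem_of_eq_coneOf (hC : C = coneOf C) (hx : x ∈ C) (hy : y ∈ C) : x + y ∈ C := by
  rw [hC]
  refine ⟨2, zero_le_two, (1 / 2 : ℝ) • x + (1 / 2 : ℝ) • y, ?_, by module⟩
  exact convex_convexHull ℝ C (subset_convexHull ℝ C hx) (subset_convexHull ℝ C hy)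
    (by norm_num) (by norm_num) (by norm_num)

lemma add_mem_diff_zero_of_eq_coneOf (hC : C = coneOf C) (hpointed : C ∩ -C = {0})
    (hx : x ∈ C) (hy : y ∈ C \ {0}) : x + y ∈ C \ {0} := by
  refine ⟨add_mem_of_eq_coneOf hC hx hy.1, fun hxy => hy.2 ?_⟩
  have hyx : -y = x := neg_eq_of_add_eq_zero_right (by rwa [add_comm] at hxy)
  rw [← hpointed]
  exact ⟨hy.1, by rwa [mem_neg, hyx]⟩

lemma add_mem_recCone {B : Set E} (hx : x ∈ recCone B) (hy : y ∈ recCone B) :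
    x + y ∈ recCone B := fun z hz t ht => by
  simpa only [smul_add, add_assoc] using hy _ (hx z hz t ht) t ht

end Cones

section Polyhedra

variable {ι κ η μ : Type*}

lemma nonneg_of_forall_le_add_mul {a b r : ℝ} (h : ∀ t : ℝ, 0 ≤ t → a ≤ b + t * r) : 0 ≤ r := by
  by_contra! hr
  have hab : a ≤ b := by simpa using h 0 le_rfl
  have key := h ((b - a + 1) / -r) (div_nonneg (by linarith) (by linarith))
  rw [div_mul_eq_mul_div, div_neg, mul_div_cancel_right₀ _ hr.ne] at key
  linarith

lemma eq_setOf_nonneg_mulVec_of_eq_coneOf [Fintype η] {C : Set (η → ℝ)} {W : Matrix μ η ℝ}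
    {v : μ → ℝ} (hW : C = {x | v ≤ W *ᵥ x}) (hC : C = coneOf C) (h0 : 0 ∈ C) :
    C = {x | 0 ≤ W *ᵥ x} := by
  have hv : v ≤ 0 := by simpa [hW] using h0
  ext x
  refine ⟨fun hx i => nonneg_of_forall_le_add_mul (a := v i) (b := 0) fun t ht => ?_,
    fun hx => hW ▸ hv.trans hx⟩
  have htx := smul_mem_of_eq_coneOf hC ht hx
  rw [hW] at htx
  simpa [mulVec_smul] using htx i

lemma mem_recCone_of_nonneg_mulVec [Fintype η] {A : Matrix ι η ℝ} {b : ι → ℝ} {d : η → ℝ}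
    (hd : 0 ≤ A *ᵥ d) : d ∈ recCone {x | b ≤ A *ᵥ x} := fun x (hx : b ≤ A *ᵥ x) t ht => by
  show b ≤ A *ᵥ (x + t • d)
  rw [mulVec_add, mulVec_smul]
  exact hx.trans (le_add_of_nonneg_right (smul_nonneg ht hd))

lemma dotProduct_mulVec_nonneg_of_mem_recCone [Fintype ι] [Fintype κ] [Fintype η] [Fintype μ]
    {A : Matrix ι η ℝ} {b : ι → ℝ} {P : Matrix κ η ℝ} {W : Matrix μ κ ℝ} {v : κ → ℝ}
    (hS : {x | b ≤ A *ᵥ x}.Nonempty)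
    (hv : v ∈ recCone (P.mulVec '' {x | b ≤ A *ᵥ x} + {z | 0 ≤ W *ᵥ z}))
    {u : ι → ℝ} {y : μ → ℝ} (hu : 0 ≤ u) (hy : 0 ≤ y) (hbal : u ᵥ* A = y ᵥ* (W * P)) :
    0 ≤ y ⬝ᵥ W *ᵥ v := by
  obtain ⟨x₀, hx₀⟩ := hS
  refine nonneg_of_forall_le_add_mul (a := u ⬝ᵥ b) (b := y ⬝ᵥ W *ᵥ (P *ᵥ x₀)) fun t ht => ?_
  obtain ⟨_, ⟨x, hx, rfl⟩, e, he, hxe⟩ :=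
    hv _ ⟨_, ⟨x₀, hx₀, rfl⟩, 0, by simp, add_zero _⟩ t ht
  calc u ⬝ᵥ b ≤ u ⬝ᵥ A *ᵥ x := dotProduct_le_dotProduct_of_nonneg_left hx hu
    _ = y ⬝ᵥ W *ᵥ (P *ᵥ x) := by
      rw [dotProduct_mulVec, hbal, ← dotProduct_mulVec, mulVec_mulVec]
    _ = y ⬝ᵥ W *ᵥ (P *ᵥ x₀) + t * (y ⬝ᵥ W *ᵥ v) - y ⬝ᵥ W *ᵥ e := by
      rw [eq_sub_of_add_eq hxe]
      simp only [mulVec_sub, mulVec_add, mulVec_smul, dotProduct_sub, dotProduct_add,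
        dotProduct_smul, smul_eq_mul]
    _ ≤ y ⬝ᵥ W *ᵥ (P *ᵥ x₀) + t * (y ⬝ᵥ W *ᵥ v) := by
      linarith [dotProduct_nonneg_of_nonneg hy he]

theorem recCone_image_add_subset [Fintype ι] [Fintype κ] [Fintype η] [Fintype μ]
    {A : Matrix ι η ℝ} {b : ι → ℝ} {P : Matrix κ η ℝ} {W : Matrix μ κ ℝ} {C : Set (κ → ℝ)}
    (hC : C = {z | 0 ≤ W *ᵥ z}) (hS : {x | b ≤ A *ᵥ x}.Nonempty) :
    recCone (P.mulVec '' {x | b ≤ A *ᵥ x} + C) ⊆ P.mulVec '' recCone {x | b ≤ A *ᵥ x} + C := by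
  subst hC
  intro v hv
  -- `d ∈ 0⁺S` with `v - Pd ∈ C`, written as one system of linear inequalities in `d`.
  obtain ⟨d, hd⟩ : ∃ d : η → ℝ,
      Sum.elim (0 : ι → ℝ) (-(W *ᵥ v)) ≤ fromRows A (-(W * P)) *ᵥ d := by
    refine exists_le_mulVec_of_forall_vecMul_eq_zero _ _ fun y hy hyM => ?_
    rw [vecMul_fromRows, vecMul_neg] at hyM
    have hyg : y ⬝ᵥ Sum.elim 0 (-(W *ᵥ v)) = -((y ∘ Sum.inr) ⬝ᵥ W *ᵥ v) := by
      simp [dotProduct, Fintype.sum_sum_type]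
    rw [hyg, neg_nonpos]
    exact dotProduct_mulVec_nonneg_of_mem_recCone hS hv (fun i => hy _) (fun i => hy _)
      (eq_of_add_neg_eq_zero hyM)
  refine ⟨P *ᵥ d, ⟨d, mem_recCone_of_nonneg_mulVec fun i => ?_, rfl⟩, v - P *ᵥ d, fun l => ?_,
    add_sub_cancel _ _⟩
  · simpa using hd (Sum.inl i)
  · have := hd (Sum.inr l)
    simp only [fromRows_mulVec, Sum.elim_inr, Pi.neg_apply, neg_mulVec, ← mulVec_mulVec] at this
    simp only [mulVec_sub, Pi.sub_apply, Pi.zero_apply]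
    linarith

end Polyhedra

theorem stmt9_general
    (m n q : ℕ)
    (A : Matrix (Fin m) (Fin n) ℝ) (P : Matrix (Fin q) (Fin n) ℝ) (b : Fin m → ℝ)
    (C : Set (Fin q → ℝ)) (hCpoly : IsPolyhedron C) (hCcone : C = coneOf C)
    (hCpointed : C ∩ -C = {0})
    (S : Set (Fin n → ℝ)) (hS : S = {x | b ≤ A.mulVec x}) (hSne : S.Nonempty)
    (UpImg : Set (Fin q → ℝ)) (hUp : UpImg = P.mulVec '' S + C)
    (hviol : ((C \ {0}) ∩ linealOf UpImg).Nonempty) :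
    (¬ ∃ x ∈ S, P.mulVec x ∉ P.mulVec '' S + (C \ {0})) ∧
    (¬ ∃ x ∈ recCone S \ {0}, P.mulVec x ∉ P.mulVec '' recCone S + (C \ {0})) := by
  subst hS hUp
  obtain ⟨c, hc, -, hc_neg⟩ := hviol
  rw [mem_neg] at hc_neg
  have hC0 : (0 : Fin q → ℝ) ∈ C := by simpa using smul_mem_of_eq_coneOf hCcone le_rfl hc.1
  obtain ⟨k, W, v, hW⟩ := hCpoly
  have hCW := eq_setOf_nonneg_mulVec_of_eq_coneOf hW hCcone hC0
  constructor
  · rintro ⟨x, hx, hx_min⟩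
    apply hx_min
    obtain ⟨_, ⟨y, hy, rfl⟩, e, he, hye⟩ :=
      hc_neg _ ⟨_, ⟨x, hx, rfl⟩, 0, hC0, add_zero _⟩ 1 zero_le_one
    refine ⟨P *ᵥ y, ⟨y, hy, rfl⟩, e + c,
      add_mem_diff_zero_of_eq_coneOf hCcone hCpointed he hc, ?_⟩
    simp only at hye ⊢
    rw [← add_assoc, hye, one_smul, neg_add_cancel_right]
  · rintro ⟨x, ⟨hx, -⟩, hx_min⟩
    apply hx_min
    obtain ⟨_, ⟨d, hd, rfl⟩, e, he, hde⟩ := recCone_image_add_subset hCW hSne hc_neg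
    refine ⟨P *ᵥ (x + d), ⟨x + d, add_mem_recCone hx hd, rfl⟩, e + c,
      add_mem_diff_zero_of_eq_coneOf hCcone hCpointed he hc, ?_⟩
    simp only at hde ⊢
    rw [mulVec_add, add_assoc, ← add_assoc (P *ᵥ d), hde, neg_add_cancel, add_zero]

/-- If `C∖{0} ∩ L(𝒫) ≠ ∅` then no minimizer for (VLP) exists. -/
theorem stmt9
    (m n q : ℕ) (hm : 0 < m) (hn : 0 < n) (hq : 0 < q)
    (A : Matrix (Fin m) (Fin n) ℝ) (P : Matrix (Fin q) (Fin n) ℝ) (b : Fin m → ℝ)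
    (C : Set (Fin q → ℝ)) (hCpoly : IsPolyhedron C) (hCcone : C = coneOf C)
    (hCpointed : C ∩ -C = {0}) (hCnontriv : C ≠ {0})
    (S : Set (Fin n → ℝ)) (hS : S = {x | b ≤ A.mulVec x}) (hSne : S.Nonempty)
    (UpImg : Set (Fin q → ℝ)) (hUp : UpImg = P.mulVec '' S + C)
    (hviol : ((C \ {0}) ∩ linealOf UpImg).Nonempty) :
    (¬ ∃ x ∈ S, P.mulVec x ∉ P.mulVec '' S + (C \ {0})) ∧
    (¬ ∃ x ∈ recCone S \ {0}, P.mulVec x ∉ P.mulVec '' recCone S + (C \ {0})) :=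
  stmt9_general m n q A P b C hCpoly hCcone hCpointed S hS hSne UpImg hUp hviol
end
end
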